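/- arXiv:math/0007078 — 7 statements merged into one kernel-verified Lean document; each statement's English description precedes it below -/
import Mathlib

section
/- Let (V, ω) be a symplectic vector space, let A : V → V be an infinitesimally symplectic linear map, and let h : V → ℝ be a smooth function invariant under the one-parameter group generated by A, i.e. h(exp(tA)·v) = h(v) for all t ∈ ℝ and v ∈ V. Then for every m ∈ V and every c ∈ ℝ, the curve t ↦ exp(tcA)·m is an integral curve of the Hamiltonian vector field X_h if and only if m is a critical point of the augmented Hamiltonian h − c·J_A, i.e. d(h − c·J_A)(m) = 0. -/
set_option maxHeartbeats 1000000
set_option synthInstance.maxHeartbeats 400000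

/-- A point `m` of a symplectic vector space `(V, ω)` is a relative equilibrium with velocity
`cA` of the Hamiltonian vector field `X_h` of a smooth Hamiltonian `h` invariant under the
one-parameter group `exp(tA)` generated by an infinitesimally symplectic map `A` if and only if
`m` is a critical point of the augmented Hamiltonian `h - c·J_A`, where
`J_A(v) = (1/2)·ω(Av, v)`. -/
theorem relative_equilibrium_iff_critical_point_of_augmented_hamiltonian
    {V : Type*} [NormedAddCommGroup V] [NormedSpace ℝ V] [FiniteDimensional ℝ V]
    (ω : V →ₗ[ℝ] V →ₗ[ℝ] ℝ)
    (halt : ∀ v : V, ω v v = 0)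
    (hnd : ∀ v : V, (∀ w : V, ω v w = 0) → v = 0)
    (A : V →L[ℝ] V)
    (hA : ∀ v w : V, ω (A v) w + ω v (A w) = 0)
    (h : V → ℝ) (hh : ContDiff ℝ (⊤ : ℕ∞) h)
    (hinv : ∀ (t : ℝ) (v : V), h (NormedSpace.exp (t • A) v) = h v)
    (Xh : V → V) (hXh : ∀ v w : V, ω (Xh v) w = fderiv ℝ h v w)
    (J : V → ℝ) (hJ : ∀ v : V, J v = (1 / 2) * ω (A v) v)
    (m : V) (c : ℝ) :
    (∀ t : ℝ, HasDerivAt (fun s : ℝ => NormedSpace.exp ((s * c) • A) m)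
        (Xh (NormedSpace.exp ((t * c) • A) m)) t) ↔
      fderiv ℝ (fun v => h v - c * J v) m = 0 := by
  classical
  set E : ℝ → (V →L[ℝ] V) := fun s => NormedSpace.exp (s • A) with hE
  -- ω as a continuous bilinear map
  obtain ⟨Ω, hΩ⟩ : ∃ Ω : V →L[ℝ] V →L[ℝ] ℝ, ∀ v w, Ω v w = ω v w := by
    refine ⟨LinearMap.toContinuousLinearMap
      { toFun := fun v => LinearMap.toContinuousLinearMap (ω v)
        map_add' := by intro x y; ext w; simp
        map_smul' := by intro r x; ext w; simp }, fun v w => by simp⟩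
  have hd : Differentiable ℝ h := hh.differentiable (by simp)
  -- skew symmetry
  have skew : ∀ x y : V, ω x y = - ω y x := by
    intro x y
    have h1 := halt (x + y)
    have h2 := halt x
    have h3 := halt y
    simp [map_add, LinearMap.add_apply] at h1
    linarith
  have hAA : ∀ x y : V, ω (A x) y = ω (A y) x := by
    intro x y
    have h1 := hA x y
    have h2 := skew x (A y)
    linarith
  -- derivative of the exponential curve
  have hderiv : ∀ (u : ℝ) (v : V), HasDerivAt (fun s : ℝ => E s v) (A (E u v)) u := by
    intro u v
    have h1 : HasDerivAt E (A * E u) u := hasDerivAt_exp_smul_const' (𝕂 := ℝ) A u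
    have := h1.clm_apply (hasDerivAt_const u v)
    simpa using this
  -- exp(sA) is symplectic
  have hsymp : ∀ (s : ℝ) (x y : V), ω (E s x) (E s y) = ω x y := by
    intro s x y
    have hf : ∀ u : ℝ, HasDerivAt (fun s : ℝ => Ω (E s x) (E s y)) 0 u := by
      intro u
      have hx := hderiv u x
      have hy := hderiv u y
      have h1 : HasDerivAt (fun s : ℝ => Ω (E s x)) (Ω (A (E u x))) u :=
        Ω.hasFDerivAt.comp_hasDerivAt u hx
      have h2 := h1.clm_apply hy
      refine h2.congr_deriv ?_
      rw [hΩ, hΩ]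
      have := hA (E u x) (E u y)
      linarith
    have hconst : (fun s : ℝ => Ω (E s x) (E s y)) s =
        (fun s : ℝ => Ω (E s x) (E s y)) 0 :=
      is_const_of_deriv_eq_zero (fun u => (hf u).differentiableAt)
        (fun u => (hf u).deriv) s 0
    have hE0 : E 0 = 1 := by simp [hE, NormedSpace.exp_zero]
    rw [← hΩ, ← hΩ x y]
    simpa [hE0] using hconst
  -- invariance of dh
  have hdh : ∀ (s : ℝ) (v w : V), fderiv ℝ h (E s v) (E s w) = fderiv ℝ h v w := by
    intro s v w
    have hcomp : h ∘ (E s) = h := funext fun v => hinv s v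
    have hc : fderiv ℝ (h ∘ (E s)) v = (fderiv ℝ h (E s v)).comp (E s : V →L[ℝ] V) := by
      rw [fderiv_comp v (hd (E s v)) (E s).differentiableAt, (E s).fderiv]
    calc fderiv ℝ h (E s v) (E s w) = fderiv ℝ (h ∘ (E s)) v w := by rw [hc]; rfl
      _ = fderiv ℝ h v w := by rw [hcomp]
  -- invertibility of exp
  have hinverse : ∀ (s : ℝ) (w : V), E s (E (-s) w) = w := by
    intro s w
    have hmul : E s * E (-s) = 1 := by
      rw [hE]
      simp only
      rw [← NormedSpace.exp_add_of_commute_of_mem_ball (𝕂 := ℝ) (((Commute.refl A).smul_left s).smul_right (-s))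
        ((NormedSpace.expSeries_radius_eq_top ℝ (V →L[ℝ] V)).symm ▸ edist_lt_top _ _)
        ((NormedSpace.expSeries_radius_eq_top ℝ (V →L[ℝ] V)).symm ▸ edist_lt_top _ _)]
      rw [← add_smul]
      simp
    calc E s (E (-s) w) = (E s * E (-s)) w := (ContinuousLinearMap.mul_apply _ _ _).symm
      _ = w := by rw [hmul]; simp
  -- equivariance of Xh
  have hequiv : ∀ (s : ℝ) (v : V), Xh (E s v) = E s (Xh v) := by
    intro s v
    have key : ∀ w : V, ω (Xh (E s v) - E s (Xh v)) w = 0 := by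
      intro w
      rw [map_sub, LinearMap.sub_apply, ← hinverse s w]
      rw [hXh, hdh, hsymp, ← hXh]
      ring
    exact sub_eq_zero.mp (hnd _ key)
  -- exp commutes with A
  have hcommA : ∀ (s : ℝ) (v : V), E s (A v) = A (E s v) := by
    intro s v
    have hcm : Commute (E s) A := ((Commute.refl A).smul_left s).exp_left
    calc E s (A v) = (E s * A) v := (ContinuousLinearMap.mul_apply _ _ _).symm
      _ = (A * E s) v := by rw [hcm.eq]
      _ = A (E s v) := ContinuousLinearMap.mul_apply _ _ _
  -- derivative of J
  have hb : HasFDerivAt (fun v : V => Ω (A v) v)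
      ((Ω (A m)).comp (ContinuousLinearMap.id ℝ V) + (Ω.comp A).flip m) m :=
    ((Ω.comp A).hasFDerivAt).clm_apply (hasFDerivAt_id m)
  have hJfun : (fun v : V => (1/2 : ℝ) * Ω (A v) v) = J := by
    funext v; rw [hJ, hΩ]
  have hJ' : HasFDerivAt J ((1/2 : ℝ) •
      ((Ω (A m)).comp (ContinuousLinearMap.id ℝ V) + (Ω.comp A).flip m)) m := by
    rw [← hJfun]
    exact hb.const_mul (1/2 : ℝ)
  have hJder : ∀ w : V, fderiv ℝ J m w = ω (A m) w := by
    intro w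
    rw [hJ'.fderiv]
    simp only [ContinuousLinearMap.coe_smul', Pi.smul_apply, ContinuousLinearMap.add_apply,
      ContinuousLinearMap.comp_apply, ContinuousLinearMap.coe_id', id_eq,
      ContinuousLinearMap.flip_apply, smul_eq_mul]
    rw [hΩ, hΩ, hAA w m]
    ring
  -- derivative of the augmented Hamiltonian
  have hAug : ∀ w : V, fderiv ℝ (fun v => h v - c * J v) m w = ω (Xh m - c • A m) w := by
    intro w
    have hsub : fderiv ℝ (fun v => h v - c * J v) m
        = fderiv ℝ h m - c • fderiv ℝ J m := by
      rw [fderiv_fun_sub (hd m) ((hJ'.differentiableAt).const_mul c),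
        fderiv_const_mul hJ'.differentiableAt c]
    rw [hsub]
    simp only [ContinuousLinearMap.coe_sub', Pi.sub_apply, ContinuousLinearMap.coe_smul',
      Pi.smul_apply, smul_eq_mul, map_sub, LinearMap.sub_apply, map_smul, LinearMap.smul_apply]
    rw [hJder w, ← hXh]
  -- reduction of the critical point condition
  have hcrit : (fderiv ℝ (fun v => h v - c * J v) m = 0) ↔ Xh m = c • A m := by
    constructor
    · intro h0
      refine sub_eq_zero.mp (hnd _ fun w => ?_)
      rw [← hAug w, h0]
      simp
    · intro heq
      ext w
      rw [hAug w, heq]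
      simp
  -- derivative of the reparametrized curve
  have hcurve : ∀ t : ℝ, HasDerivAt (fun s : ℝ => E (s * c) m) (c • A (E (t * c) m)) t := by
    intro t
    have h1 : HasDerivAt (fun s : ℝ => E s m) (A (E (t * c) m)) (t * c) := hderiv (t * c) m
    have h2 : HasDerivAt (fun s : ℝ => s * c) c t := by
      simpa using (hasDerivAt_id t).mul_const c
    exact h1.scomp t h2
  rw [hcrit]
  constructor
  · intro hint
    have h0 := hint 0
    have h0' : HasDerivAt (fun s : ℝ => NormedSpace.exp ((s * c) • A) m)
        (c • A (NormedSpace.exp ((0 * c) • A) m)) 0 := by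
      simpa only [hE] using hcurve 0
    have hu := h0.unique h0'
    simpa [zero_smul, NormedSpace.exp_zero] using hu
  · intro heq t
    have hX : Xh (E (t * c) m) = c • A (E (t * c) m) := by
      rw [hequiv, heq, map_smul, hcommA]
    have := hX ▸ hcurve t
    simpa only [hE] using this
end

section
/- Let (V, ω) be a symplectic vector space, let A : V → V be an infinitesimally symplectic linear map, and let h : V → ℝ be a smooth function invariant under the one-parameter group generated by A, i.e. h(exp(tA)·v) = h(v) for all t ∈ ℝ and v ∈ V. Then dJ_A(v)(X_h(v)) = 0 for all v ∈ V; consequently J_A is constant along every integral curve of X_h, and every level set of J_A is invariant under the flow of X_h. -/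
/-- Noether's theorem for linear symplectic actions: if the smooth Hamiltonian `h` on the
symplectic vector space `(V, ω)` is invariant under the one-parameter group `exp(tA)` generated
by the infinitesimally symplectic map `A`, then the momentum function `J_A(v) = (1/2)·ω(Av, v)`
satisfies `dJ_A(v)(X_h(v)) = 0` for all `v`; consequently `J_A` is constant along every integral
curve of `X_h` and every level set of `J_A` is invariant under the flow of `X_h`. -/
theorem noether_momentum_conserved
    {V : Type*} [NormedAddCommGroup V] [NormedSpace ℝ V] [FiniteDimensional ℝ V]
    (ω : V →ₗ[ℝ] V →ₗ[ℝ] ℝ)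
    (halt : ∀ v : V, ω v v = 0)
    (hnd : ∀ v : V, (∀ w : V, ω v w = 0) → v = 0)
    (A : V →L[ℝ] V)
    (hA : ∀ v w : V, ω (A v) w + ω v (A w) = 0)
    (h : V → ℝ) (hh : ContDiff ℝ (⊤ : ℕ∞) h)
    (hinv : ∀ (t : ℝ) (v : V), h (NormedSpace.exp (t • A) v) = h v)
    (Xh : V → V) (hXh : ∀ v w : V, ω (Xh v) w = fderiv ℝ h v w)
    (J : V → ℝ) (hJ : ∀ v : V, J v = (1 / 2) * ω (A v) v) :
    (∀ v : V, fderiv ℝ J v (Xh v) = 0) ∧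
    (∀ γ : ℝ → V, (∀ t : ℝ, HasDerivAt γ (Xh (γ t)) t) → ∀ t : ℝ, J (γ t) = J (γ 0)) ∧
    (∀ μ : ℝ, ∀ γ : ℝ → V, (∀ t : ℝ, HasDerivAt γ (Xh (γ t)) t) → J (γ 0) = μ →
      ∀ t : ℝ, γ t ∈ {v : V | J v = μ}) := by
  -- antisymmetry of ω
  have hskew : ∀ x y : V, ω x y = - ω y x := by
    intro x y
    have := halt (x + y)
    simp only [map_add, LinearMap.add_apply, halt x, halt y] at this
    linarith
  -- continuous bilinear map b v w = ω (A v) w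
  let b : V →L[ℝ] V →L[ℝ] ℝ :=
    LinearMap.toContinuousLinearMap
      { toFun := fun v => LinearMap.toContinuousLinearMap (ω (A v))
        map_add' := by intro x y; ext w; simp
        map_smul' := by intro c x; ext w; simp }
  have hb : ∀ v w : V, b v w = ω (A v) w := fun v w => rfl
  -- symmetry of b
  have hbsymm : ∀ v w : V, b w v = b v w := by
    intro v w
    rw [hb, hb, hskew (A w) v]
    have := hA v w
    linarith
  -- derivative of J at v is b v
  have hJd : ∀ v : V, HasFDerivAt J (b v) v := by
    intro v
    have hq := b.hasFDerivAt_of_bilinear (hasFDerivAt_id v) (hasFDerivAt_id v)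
    have hq2 := hq.const_mul (1 / 2 : ℝ)
    have hEq : (fun y : V => (1 / 2 : ℝ) * b (id y) (id y)) = J := by
      funext y; simp only [id_eq]; rw [hJ y]; rfl
    rw [hEq] at hq2
    convert hq2 using 1
    iterate 2 rfl
    ext w
    simp only [ContinuousLinearMap.coe_smul', Pi.smul_apply, ContinuousLinearMap.add_apply,
      ContinuousLinearMap.precompR_apply, ContinuousLinearMap.precompL_apply,
      ContinuousLinearMap.coe_id', id_eq, smul_eq_mul, ContinuousLinearMap.compL_apply,
      ContinuousLinearMap.coe_comp', Function.comp_apply]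
    rw [hbsymm v w]
    ring
  -- dh(v)(Av) = 0 from invariance
  have hdh : ∀ v : V, fderiv ℝ h v (A v) = 0 := by
    intro v
    have hexp := hasDerivAt_exp_smul_const (𝕂 := ℝ) (A : V →L[ℝ] V) (0 : ℝ)
    have hcurve : HasDerivAt (fun t : ℝ => NormedSpace.exp (t • A) v) (A v) 0 := by
      have := hexp.clm_apply (hasDerivAt_const (0 : ℝ) v)
      simpa using this
    have hfd : HasFDerivAt h (fderiv ℝ h v) ((fun t : ℝ => NormedSpace.exp (t • A) v) 0) := by
      have : (fun t : ℝ => NormedSpace.exp (t • A) v) 0 = v := by simp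
      rw [this]
      exact (hh.differentiable (by simp) v).hasFDerivAt
    have hcomp : HasDerivAt (fun t : ℝ => h (NormedSpace.exp (t • A) v))
        (fderiv ℝ h v (A v)) 0 := hfd.comp_hasDerivAt 0 hcurve
    have hconst : (fun t : ℝ => h (NormedSpace.exp (t • A) v)) = fun _ => h v := by
      funext t; exact hinv t v
    rw [hconst] at hcomp
    have := (hasDerivAt_const (0 : ℝ) (h v)).unique hcomp
    exact this.symm
  -- Part 1
  have part1 : ∀ v : V, fderiv ℝ J v (Xh v) = 0 := by
    intro v
    rw [(hJd v).fderiv, hb, hskew (A v) (Xh v), hXh, hdh, neg_zero]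
  -- Part 2
  have part2 : ∀ γ : ℝ → V, (∀ t : ℝ, HasDerivAt γ (Xh (γ t)) t) →
      ∀ t : ℝ, J (γ t) = J (γ 0) := by
    intro γ hγ t
    have hderiv : ∀ s : ℝ, HasDerivAt (fun u => J (γ u)) 0 s := by
      intro s
      have := (hJd (γ s)).comp_hasDerivAt s (hγ s)
      rwa [← (hJd (γ s)).fderiv, part1 (γ s)] at this
    exact is_const_of_deriv_eq_zero (fun s => (hderiv s).differentiableAt)
      (fun s => (hderiv s).deriv) t 0
  refine ⟨part1, part2, ?_⟩
  intro μ γ hγ h0 t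
  simp only [Set.mem_setOf_eq]
  rw [part2 γ hγ t, h0]
end

section
/- Let V be a finite-dimensional real inner product space, P a finite-dimensional real normed space, and f : V × P → ℝ a smooth function defined on a neighborhood of (0, 0) such that the partial derivative D_v f(0, α) = 0 for all α near 0. Let L : V → V be the symmetric linear operator defined by ⟨L v, w⟩ = D²_{vv} f(0, 0)(v, w), set V₀ := ker L and V₁ := V₀^⊥. Let v₁ be a map from a neighborhood of (0, 0) in V₀ × P into V₁ with v₁(0, 0) = 0 which is continuous and satisfies D_v f(v₀ + v₁(v₀, α), α)(z) = 0 for all z ∈ V₁ and all (v₀, α) in its domain. Then: (i) v₁(0, α) = 0 for all α sufficiently near 0; and (ii) if moreover v₁ is differentiable at (0,0), then the partial derivative of v₁ with respect to the V₀-variable at (0, 0) is zero, D_{V₀} v₁(0, 0) = 0. -/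
set_option maxHeartbeats 1000000

open Filter Topology RealInnerProductSpace

open scoped ContDiff

/-- Properties of the implicitly defined function in the Lyapunov–Schmidt reduction: with
`L` the symmetric operator representing the second partial derivative `D²_{vv} f(0,0)`,
`V₀ = ker L`, `V₁ = V₀^⊥`, and `v₁` a continuous local solution of
`D_v f(v₀ + v₁(v₀,α), α)|_{V₁} = 0` with `v₁(0,0) = 0`, one has (i) `v₁(0, α) = 0` for `α`
near `0`, and (ii) if `v₁` is differentiable at `(0,0)` then its partial derivative in the
`V₀`-direction vanishes there. -/
theorem lyapunov_schmidt_implicit_function_properties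
    {V : Type*} [NormedAddCommGroup V] [InnerProductSpace ℝ V] [FiniteDimensional ℝ V]
    {P : Type*} [NormedAddCommGroup P] [NormedSpace ℝ P] [FiniteDimensional ℝ P]
    (U : Set (V × P)) (hU : U ∈ 𝓝 ((0, 0) : V × P))
    (f : V × P → ℝ) (hf : ContDiffOn ℝ (⊤ : ℕ∞) f U)
    (hcrit : ∀ᶠ α in 𝓝 (0 : P), fderiv ℝ (fun v : V => f (v, α)) 0 = 0)
    (L : V →ₗ[ℝ] V)
    (hL : ∀ v w : V, ⟪L v, w⟫ = fderiv ℝ (fderiv ℝ (fun v : V => f (v, 0))) 0 v w)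
    (V₀ : Submodule ℝ V) (hV₀ : V₀ = LinearMap.ker L)
    (V₁ : Submodule ℝ V) (hV₁ : V₁ = V₀ᗮ)
    (Ω : Set (V₀ × P)) (hΩ : Ω ∈ 𝓝 ((0, 0) : V₀ × P))
    (v₁ : V₀ × P → V₁)
    (hv₁cont : ContinuousOn v₁ Ω) (hv₁0 : v₁ (0, 0) = 0)
    (heq : ∀ p ∈ Ω, ∀ z : V₁,
      fderiv ℝ (fun v : V => f (v, p.2)) ((p.1 : V) + (v₁ p : V)) (z : V) = 0) :
    (∀ᶠ α in 𝓝 (0 : P), v₁ (0, α) = 0) ∧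
    (DifferentiableAt ℝ v₁ ((0, 0) : V₀ × P) →
      ∀ v : V₀, fderiv ℝ v₁ ((0, 0) : V₀ × P) (v, 0) = 0) := by
  classical
  obtain ⟨U', hU'sub, hU'o, hU'mem⟩ : ∃ U' ⊆ U, IsOpen U' ∧ ((0,0) : V × P) ∈ U' :=
    mem_nhds_iff.mp hU
  have hone : (1 : WithTop ℕ∞) ≤ ∞ := by exact_mod_cast le_top
  have htwo : (2 : WithTop ℕ∞) ≤ ∞ := by norm_cast
  have hinf : (∞ : WithTop ℕ∞) + 1 ≤ ∞ := le_rfl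
  have hf' : ContDiffOn ℝ ∞ f U' := (hf.of_le (by simp)).mono hU'sub
  set e : V ≃ₗᵢ[ℝ] StrongDual ℝ V := InnerProductSpace.toDual ℝ V with he
  set g : V × P → (V →L[ℝ] ℝ) :=
    fun x => (fderiv ℝ f x).comp (ContinuousLinearMap.inl ℝ V P) with hgdef
  set F : V × P → V := fun x => e.symm (g x) with hFdef
  -- inner product of F with a vector
  have hinnerF : ∀ x z, ⟪F x, z⟫ = g x z := by
    intro x z
    simp [hFdef, he, ← InnerProductSpace.toDual_apply_apply]
  -- partial derivative identification
  have hpart : ∀ x ∈ U', fderiv ℝ (fun v : V => f (v, x.2)) x.1 = g x := by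
    rintro ⟨a, b⟩ hx
    have hdf : HasFDerivAt f (fderiv ℝ f (a, b)) (a, b) :=
      ((hf'.contDiffAt (hU'o.mem_nhds hx)).differentiableAt (by simp)).hasFDerivAt
    exact (hdf.comp a (hasFDerivAt_prodMk_left a b)).fderiv
  -- smoothness of g and F
  have hg : ContDiffOn ℝ ∞ g U' := by
    have : ContDiffOn ℝ ∞ (fderiv ℝ f) U' := hf'.fderiv_of_isOpen hU'o hinf
    exact (((ContinuousLinearMap.compL ℝ V (V × P) ℝ).flip
      (ContinuousLinearMap.inl ℝ V P)).contDiff.comp_contDiffOn this)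
  have hF : ContDiffOn ℝ ∞ F U' := e.symm.contDiff.comp_contDiffOn hg
  have hFat : ContDiffAt ℝ ∞ F (0, 0) := hF.contDiffAt (hU'o.mem_nhds hU'mem)
  set M : V × P →L[ℝ] V := fderiv ℝ F (0, 0) with hMdef
  have hFd : HasFDerivAt F M (0, 0) := (hFat.differentiableAt (by simp)).hasFDerivAt
  -- M (z, 0) = L z
  have hML : ∀ z : V, M (z, 0) = L z := by
    have hEg : HasFDerivAt g ((e.toContinuousLinearEquiv : V →L[ℝ] StrongDual ℝ V).comp M)
        (0, 0) := by
      have : g = fun x => e.toContinuousLinearEquiv (F x) := by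
        funext x; simp [hFdef]
      rw [this]
      exact ((e.toContinuousLinearEquiv : V →L[ℝ] StrongDual ℝ V).hasFDerivAt).comp _ hFd
    have hmk : HasFDerivAt (fun v : V => ((v, 0) : V × P)) (ContinuousLinearMap.inl ℝ V P) 0 :=
      hasFDerivAt_prodMk_left (0 : V) (0 : P)
    have hgv := hEg.comp (0 : V) hmk
    have hev : (fderiv ℝ (fun v : V => f (v, 0))) =ᶠ[𝓝 (0 : V)] fun v => g (v, 0) := by
      have hcont : Continuous (fun v : V => ((v, 0) : V × P)) := continuous_id.prodMk continuous_const
      have : ∀ᶠ v in 𝓝 (0 : V), ((v, (0 : P)) : V × P) ∈ U' := by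
        have := hcont.continuousAt (x := (0 : V))
        exact this (hU'o.mem_nhds hU'mem)
      filter_upwards [this] with v hv
      exact hpart (v, 0) hv
    have hfd2 : fderiv ℝ (fderiv ℝ (fun v : V => f (v, 0))) 0
        = (((e.toContinuousLinearEquiv : V →L[ℝ] StrongDual ℝ V).comp M).comp
          (ContinuousLinearMap.inl ℝ V P)) := by
      rw [hev.fderiv_eq]
      exact hgv.fderiv
    intro z
    apply ext_inner_right ℝ
    intro w
    have h5 := hL z w
    rw [hfd2] at h5
    rw [h5]
    simp only [he, ContinuousLinearMap.comp_apply, ContinuousLinearMap.inl_apply,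
      ContinuousLinearEquiv.coe_coe, LinearIsometryEquiv.coe_toContinuousLinearEquiv]
    exact (InnerProductSpace.toDual_apply_apply).symm
  -- symmetry of L
  have hsym : ∀ v w : V, ⟪L v, w⟫ = ⟪L w, v⟫ := by
    have h1 : ContDiffAt ℝ ∞ f ((0 : V), (0 : P)) := hf'.contDiffAt (hU'o.mem_nhds hU'mem)
    have hmk : ContDiffAt ℝ ∞ (fun v : V => ((v, 0) : V × P)) 0 :=
      (contDiff_id.prodMk contDiff_const).contDiffAt
    have hf0 := h1.comp (0 : V) hmk
    have hs : IsSymmSndFDerivAt ℝ (fun v : V => f (v, 0)) 0 := hf0.isSymmSndFDerivAt (by rw [minSmoothness_of_isRCLikeNormedField]; exact htwo)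
    intro v w
    rw [hL v w, hL w v]
    exact hs.eq v w
  -- L maps into V₁ and T is injective
  have hLmem : ∀ z : V, L z ∈ V₁ := by
    intro z
    rw [hV₁, Submodule.mem_orthogonal]
    intro k hk
    rw [hV₀, LinearMap.mem_ker] at hk
    rw [real_inner_comm, hsym, hk]
    simp
  have hTinj : ∀ z : V₁, V₁.orthogonalProjectionOnto (L (z : V)) = 0 → z = 0 := by
    intro z hz
    have h1 : L (z : V) = 0 := by
      have := (Submodule.starProjection_eq_self_iff (K := V₁)).mpr (hLmem (z : V))
      rw [Submodule.starProjection_apply] at this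
      rw [hz] at this
      simpa using this.symm
    have h2 : (z : V) ∈ V₀ := by rw [hV₀]; exact LinearMap.mem_ker.mpr h1
    have h3 : (z : V) ∈ V₀ᗮ := hV₁ ▸ z.2
    have : ⟪(z : V), (z : V)⟫ = 0 := (Submodule.mem_orthogonal V₀ (z : V)).mp h3 _ h2
    exact Subtype.ext (inner_self_eq_zero.mp this)
  -- the continuous linear map A, G, H
  set A : (V₁ × (V₀ × P)) →L[ℝ] V × P :=
    (V₁.subtypeL.comp (ContinuousLinearMap.fst ℝ V₁ (V₀ × P)) +
      (V₀.subtypeL.comp ((ContinuousLinearMap.fst ℝ V₀ P).comp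
        (ContinuousLinearMap.snd ℝ V₁ (V₀ × P))))).prod
      ((ContinuousLinearMap.snd ℝ V₀ P).comp (ContinuousLinearMap.snd ℝ V₁ (V₀ × P))) with hAdef
  have hAapp : ∀ x : V₁ × (V₀ × P), A x = ((x.1 : V) + (x.2.1 : V), x.2.2) := by
    intro x; rfl
  set G : V₁ × (V₀ × P) → V₁ := fun x => V₁.orthogonalProjectionOnto (F (A x)) with hGdef
  set H : V₁ × (V₀ × P) → V₁ × (V₀ × P) := fun x => (G x, x.2) with hHdef
  have hA0 : A 0 = (0, 0) := by simp [hAapp]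
  set DG : (V₁ × (V₀ × P)) →L[ℝ] V₁ :=
    (V₁.orthogonalProjectionOnto).comp (M.comp A) with hDGdef
  have hGd : HasFDerivAt G DG (0 : V₁ × (V₀ × P)) := by
    have h1 : HasFDerivAt F M (A 0) := hA0 ▸ hFd
    have h2 := (h1.comp (0 : V₁ × (V₀ × P)) A.hasFDerivAt)
    exact ((V₁.orthogonalProjectionOnto).hasFDerivAt).comp _ h2
  set N : (V₁ × (V₀ × P)) →L[ℝ] (V₁ × (V₀ × P)) :=
    DG.prod (ContinuousLinearMap.snd ℝ V₁ (V₀ × P)) with hNdef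
  have hHd : HasFDerivAt H N (0 : V₁ × (V₀ × P)) :=
    hGd.prodMk (ContinuousLinearMap.snd ℝ V₁ (V₀ × P)).hasFDerivAt
  -- key vanishing lemma : if the criticality equation holds at a point, G vanishes
  have hGzero : ∀ x : V₁ × (V₀ × P), A x ∈ U' →
      (∀ z : V₁, fderiv ℝ (fun v : V => f (v, (A x).2)) (A x).1 (z : V) = 0) → G x = 0 := by
    intro x hmem hz
    have : F (A x) ∈ V₁ᗮ := by
      rw [Submodule.mem_orthogonal]
      intro u hu
      rw [real_inner_comm, hinnerF]
      have := hz ⟨u, hu⟩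
      rw [hpart _ hmem] at this
      exact this
    exact Submodule.orthogonalProjectionOnto_apply_of_mem_orthogonal this
  -- strict derivative of H with invertible derivative
  have hGc : ContDiffAt ℝ ∞ G (0 : V₁ × (V₀ × P)) := by
    have h1 : ContDiffAt ℝ ∞ F (A 0) := hA0 ▸ hFat
    have h2 := h1.comp (0 : V₁ × (V₀ × P)) A.contDiff.contDiffAt
    exact ((V₁.orthogonalProjectionOnto).contDiff.contDiffAt).comp _ h2
  have hHc : ContDiffAt ℝ ∞ H (0 : V₁ × (V₀ × P)) := hGc.prodMk contDiff_snd.contDiffAt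
  have hHs : HasStrictFDerivAt H N (0 : V₁ × (V₀ × P)) := by
    have := hHc.hasStrictFDerivAt (by simp)
    rwa [hHd.fderiv] at this
  have hLv : ∀ v : V₀, L (v : V) = 0 := by
    intro v
    have hv := v.2
    simp only [hV₀, LinearMap.mem_ker] at hv
    exact hv
  have hNker : ∀ x : V₁ × (V₀ × P), N x = 0 → x = 0 := by
    intro x hx
    have h2 : x.2 = 0 := congrArg Prod.snd hx
    have h1 : DG x = 0 := congrArg Prod.fst hx
    have hAx : A x = ((x.1 : V), 0) := by
      rw [hAapp, h2]
      simp
    have hDGx : DG x = V₁.orthogonalProjectionOnto (L (x.1 : V)) := by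
      show V₁.orthogonalProjectionOnto (M (A x)) = _
      rw [hAx, hML]
    rw [hDGx] at h1
    have hx1 : x.1 = 0 := hTinj x.1 h1
    exact Prod.ext hx1 h2
  have hNinj : Function.Injective N := by
    rw [injective_iff_map_eq_zero]
    exact hNker
  have hNsurj : Function.Surjective N := by
    have : Function.Injective (N : (V₁ × (V₀ × P)) →ₗ[ℝ] (V₁ × (V₀ × P))) := hNinj
    exact LinearMap.injective_iff_surjective.mp this
  set Ne : (V₁ × (V₀ × P)) ≃L[ℝ] (V₁ × (V₀ × P)) :=
    ContinuousLinearEquiv.ofBijective N (LinearMap.ker_eq_bot.mpr hNinj)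
      (LinearMap.range_eq_top.mpr hNsurj) with hNe
  have hNeN : (Ne : (V₁ × (V₀ × P)) →L[ℝ] (V₁ × (V₀ × P))) = N :=
    ContinuousLinearEquiv.coe_ofBijective _ _ _
  have hHs' : HasStrictFDerivAt H
      (Ne : (V₁ × (V₀ × P)) →L[ℝ] (V₁ × (V₀ × P))) (0 : V₁ × (V₀ × P)) := by
    rw [hNeN]; exact hHs
  -- continuity facts
  have hcc : ContinuousAt v₁ ((0, 0) : V₀ × P) := hv₁cont.continuousAt hΩ
  have hcctend : Tendsto v₁ (𝓝 ((0, 0) : V₀ × P)) (𝓝 (0 : V₁)) := by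
    have := hcc.tendsto
    rwa [hv₁0] at this
  constructor
  · -- Part (i)
    have hc0 : Tendsto (fun α : P => (((0 : V₀), α) : V₀ × P)) (𝓝 0)
        (𝓝 (((0 : V₀), (0 : P)) : V₀ × P)) :=
      tendsto_const_nhds.prodMk_nhds tendsto_id
    have hv₁tend : Tendsto (fun α : P => v₁ ((0 : V₀), α)) (𝓝 0) (𝓝 (0 : V₁)) :=
      hcctend.comp hc0
    set c : P → V₁ × (V₀ × P) := fun α => (v₁ ((0 : V₀), α), ((0 : V₀), α)) with hcdef
    set c' : P → V₁ × (V₀ × P) := fun α => (0, ((0 : V₀), α)) with hc'def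
    have hctend : Tendsto c (𝓝 0) (𝓝 (0 : V₁ × (V₀ × P))) := hv₁tend.prodMk_nhds hc0
    have hc'tend : Tendsto c' (𝓝 0) (𝓝 (0 : V₁ × (V₀ × P))) :=
      tendsto_const_nhds.prodMk_nhds hc0
    have hΩev : ∀ᶠ α in 𝓝 (0 : P), (((0 : V₀), α) : V₀ × P) ∈ Ω := hc0.eventually_mem hΩ
    have hU'ev1 : ∀ᶠ α in 𝓝 (0 : P), (((v₁ ((0 : V₀), α) : V) + ((0 : V₀) : V), α) : V × P) ∈ U' := by
      have t1 : Tendsto (fun α : P => (((v₁ ((0 : V₀), α) : V) + ((0 : V₀) : V), α) : V × P))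
          (𝓝 0) (𝓝 ((0 : V), (0 : P))) := by
        have t11 : Tendsto (fun α : P => (v₁ ((0 : V₀), α) : V)) (𝓝 0) (𝓝 (0 : V)) := by
          have := (continuous_subtype_val.tendsto (0 : V₁)).comp hv₁tend
          simpa [Function.comp_def] using this
        have t12 : Tendsto (fun α : P => (v₁ ((0 : V₀), α) : V) + ((0 : V₀) : V)) (𝓝 0)
            (𝓝 (0 : V)) := by simpa using t11
        exact t12.prodMk_nhds tendsto_id
      exact t1.eventually_mem (hU'o.mem_nhds hU'mem)
    have hU'ev2 : ∀ᶠ α in 𝓝 (0 : P), (((0 : V), α) : V × P) ∈ U' := by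
      have t1 : Tendsto (fun α : P => (((0 : V), α) : V × P)) (𝓝 0) (𝓝 ((0 : V), (0 : P))) :=
        tendsto_const_nhds.prodMk_nhds tendsto_id
      exact t1.eventually_mem (hU'o.mem_nhds hU'mem)
    filter_upwards [hΩev, hU'ev1, hU'ev2, hcrit, hctend.eventually hHs'.eventually_left_inverse,
      hc'tend.eventually hHs'.eventually_left_inverse] with α h1 h2 h3 h4 h5 h6
    have hGca : G (c α) = 0 := by
      apply hGzero (c α)
      · rw [hAapp]
        exact h2
      · intro z
        have h := heq ((0 : V₀), α) h1 z
        simp only [Submodule.coe_zero, zero_add] at h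
        simp only [hAapp, hcdef, Submodule.coe_zero, add_zero]
        exact h
    have hGc'a : G (c' α) = 0 := by
      apply hGzero (c' α)
      · rw [hAapp]
        simpa [hc'def] using h3
      · intro z
        simp only [hAapp, hc'def, Submodule.coe_zero, add_zero, zero_add]
        rw [h4]
        rfl
    have hHeq : H (c α) = H (c' α) := by
      show (G (c α), (c α).2) = (G (c' α), (c' α).2)
      rw [hGca, hGc'a]
    have hc_eq : c α = c' α := by
      calc c α = hHs'.localInverse H _ _ (H (c α)) := h5.symm
        _ = hHs'.localInverse H _ _ (H (c' α)) := by rw [hHeq]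
        _ = c' α := h6
    exact congrArg Prod.fst hc_eq
  · -- Part (ii)
    intro hdiff v
    set D : (V₀ × P) →L[ℝ] V₁ := fderiv ℝ v₁ ((0, 0) : V₀ × P) with hDdef
    have hφd : HasFDerivAt (fun p : V₀ × P => (v₁ p, p))
        (D.prod (ContinuousLinearMap.id ℝ (V₀ × P))) ((0, 0) : V₀ × P) :=
      hdiff.hasFDerivAt.prodMk (hasFDerivAt_id _)
    have hGd' : HasFDerivAt G DG ((v₁ ((0, 0) : V₀ × P), ((0, 0) : V₀ × P))) := by
      rw [hv₁0]; exact hGd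
    have hψd := HasFDerivAt.comp (g := G) (f := fun p : V₀ × P => (v₁ p, p))
      ((0, 0) : V₀ × P) hGd' hφd
    have hψ0 : (fun p : V₀ × P => G (v₁ p, p)) =ᶠ[𝓝 ((0, 0) : V₀ × P)]
        fun _ => (0 : V₁) := by
      have t1 : Tendsto (fun p : V₀ × P => (((p.1 : V) + (v₁ p : V), p.2) : V × P))
          (𝓝 ((0, 0) : V₀ × P)) (𝓝 ((0 : V), (0 : P))) := by
        have t11 : Tendsto (fun p : V₀ × P => (p.1 : V)) (𝓝 ((0, 0) : V₀ × P)) (𝓝 (0 : V)) := by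
          have : Continuous (fun p : V₀ × P => (p.1 : V)) :=
            continuous_subtype_val.comp continuous_fst
          simpa using this.tendsto ((0, 0) : V₀ × P)
        have t12 : Tendsto (fun p : V₀ × P => (v₁ p : V)) (𝓝 ((0, 0) : V₀ × P)) (𝓝 (0 : V)) := by
          have := (continuous_subtype_val.tendsto (0 : V₁)).comp hcctend
          simpa [Function.comp_def] using this
        have t13 := t11.add t12
        rw [add_zero] at t13
        exact t13.prodMk_nhds (continuous_snd.tendsto _)
      have hΩev : ∀ᶠ p in 𝓝 ((0, 0) : V₀ × P), p ∈ Ω := hΩ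
      filter_upwards [hΩev, t1.eventually_mem (hU'o.mem_nhds hU'mem)] with p h1 h2
      apply hGzero (v₁ p, p)
      · rw [hAapp, add_comm]
        exact h2
      · intro z
        have h := heq p h1 z
        simp only [hAapp]
        rw [add_comm]
        exact h
    have hfz : fderiv ℝ (fun p : V₀ × P => G (v₁ p, p)) ((0, 0) : V₀ × P) = 0 := by
      rw [hψ0.fderiv_eq]
      exact fderiv_const_apply 0
    have h7 : fderiv ℝ (fun p : V₀ × P => G (v₁ p, p)) ((0, 0) : V₀ × P)
        = DG.comp (D.prod (ContinuousLinearMap.id ℝ (V₀ × P))) := hψd.fderiv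
    rw [hfz] at h7
    have h8 : DG (D (v, 0), ((v, 0) : V₀ × P)) = 0 := by
      have := congrArg (fun T : (V₀ × P) →L[ℝ] V₁ => T ((v, 0) : V₀ × P)) h7
      simpa using this.symm
    have hval : DG (D (v, 0), ((v, 0) : V₀ × P))
        = V₁.orthogonalProjectionOnto (L ((D (v, 0) : V₁) : V)) := by
      show V₁.orthogonalProjectionOnto (M (A (D (v, 0), ((v, 0) : V₀ × P)))) = _
      rw [hAapp]
      have hsplit : ((((D (v, 0) : V₁) : V) + ((v : V₀) : V), (0 : P)) : V × P)
          = ((((D (v, 0) : V₁) : V), (0 : P)) : V × P) + (((v : V), (0 : P)) : V × P) := by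
        simp [Prod.ext_iff]
      rw [hsplit, map_add, hML, hML, hLv v, add_zero]
    rw [hval] at h8
    exact hTinj _ h8
end

section
/- Let V be a finite-dimensional real inner product space, P a finite-dimensional real normed space, f₀ : V → ℝ smooth with df₀(0) = 0, and for each α ∈ P let b_α be a symmetric bilinear form on V depending linearly on α. Define f : V × P → ℝ by f(v, α) := f₀(v) − (1/2) b_α(v, v). Let L be the symmetric operator with ⟨L v, w⟩ = d²f₀(0)(v, w), set V₀ := ker L, V₁ := V₀^⊥, and let v₁ be a smooth map from a neighborhood of (0, 0) in V₀ × P into V₁ with v₁(0, α) = 0 for all α near 0, D_{V₀} v₁(0, 0) = 0, and satisfying D_v f(v₀ + v₁(v₀, α), α)(z) = 0 for all z ∈ V₁. Then for all v ∈ V₀, α ∈ P and z ∈ V₁, the mixed second derivative of v₁ satisfies d²f₀(0)( D²_{V₀, α} v₁(0, 0)·(v, α), z ) = b_α(v, z). -/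
open Filter Topology RealInnerProductSpace

set_option maxHeartbeats 1000000
set_option synthInstance.maxHeartbeats 400000

/-- The trilinear form `b` as a continuous linear map (finite dimensions). -/
noncomputable def bTriCLM {V : Type*} [NormedAddCommGroup V] [NormedSpace ℝ V]
    [FiniteDimensional ℝ V]
    {P : Type*} [NormedAddCommGroup P] [NormedSpace ℝ P] [FiniteDimensional ℝ P]
    (b : P →ₗ[ℝ] V →ₗ[ℝ] V →ₗ[ℝ] ℝ) : P →L[ℝ] V →L[ℝ] V →L[ℝ] ℝ :=
  LinearMap.toContinuousLinearMap
  { toFun := fun β => LinearMap.toContinuousLinearMap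
      { toFun := fun x => LinearMap.toContinuousLinearMap (b β x)
        map_add' := fun x y => by ext u; simp
        map_smul' := fun c x => by ext u; simp }
    map_add' := fun β γ => by ext x u; simp
    map_smul' := fun c β => by ext x u; simp }

@[simp] theorem bTriCLM_apply {V : Type*} [NormedAddCommGroup V] [NormedSpace ℝ V]
    [FiniteDimensional ℝ V]
    {P : Type*} [NormedAddCommGroup P] [NormedSpace ℝ P] [FiniteDimensional ℝ P]
    (b : P →ₗ[ℝ] V →ₗ[ℝ] V →ₗ[ℝ] ℝ) (β : P) (x u : V) :
    bTriCLM b β x u = b β x u := rfl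

/-- Mixed second derivative of the Lyapunov–Schmidt implicit function: for
`f(v, α) = f₀(v) - (1/2)·b_α(v, v)` with `df₀(0) = 0`, `L` the symmetric operator of
`d²f₀(0)`, `V₀ = ker L`, `V₁ = V₀^⊥`, and `v₁` the smooth implicit solution of
`D_v f(v₀ + v₁(v₀,α), α)|_{V₁} = 0` with `v₁(0, α) = 0` near `0` and `D_{V₀} v₁(0,0) = 0`,
one has `d²f₀(0)(D²_{V₀,α} v₁(0,0)·(v, α), z) = b_α(v, z)` for `v ∈ V₀`, `α ∈ P`, `z ∈ V₁`. -/
theorem lyapunov_schmidt_implicit_function_mixed_derivative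
    {V : Type*} [NormedAddCommGroup V] [InnerProductSpace ℝ V] [FiniteDimensional ℝ V]
    {P : Type*} [NormedAddCommGroup P] [NormedSpace ℝ P] [FiniteDimensional ℝ P]
    (f₀ : V → ℝ) (hf₀ : ContDiff ℝ (⊤ : ℕ∞) f₀) (hdf₀ : fderiv ℝ f₀ 0 = 0)
    (b : P →ₗ[ℝ] V →ₗ[ℝ] V →ₗ[ℝ] ℝ)
    (hbsymm : ∀ (α : P) (v w : V), b α v w = b α w v)
    (f : V × P → ℝ) (hf : ∀ (v : V) (α : P), f (v, α) = f₀ v - (1 / 2) * b α v v)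
    (L : V →ₗ[ℝ] V)
    (hL : ∀ v w : V, ⟪L v, w⟫ = fderiv ℝ (fderiv ℝ f₀) 0 v w)
    (V₀ : Submodule ℝ V) (hV₀ : V₀ = LinearMap.ker L)
    (V₁ : Submodule ℝ V) (hV₁ : V₁ = V₀ᗮ)
    (Ω : Set (V₀ × P)) (hΩopen : IsOpen Ω) (hΩ0 : ((0, 0) : V₀ × P) ∈ Ω)
    (v₁ : V₀ × P → V₁) (hv₁ : ContDiffOn ℝ (⊤ : ℕ∞) v₁ Ω)
    (hv₁0 : ∀ᶠ α in 𝓝 (0 : P), v₁ (0, α) = 0)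
    (hDv₁ : ∀ v : V₀, fderiv ℝ v₁ ((0, 0) : V₀ × P) (v, 0) = 0)
    (heq : ∀ p ∈ Ω, ∀ z : V₁,
      fderiv ℝ (fun v : V => f (v, p.2)) ((p.1 : V) + (v₁ p : V)) (z : V) = 0) :
    ∀ (v : V₀) (α : P) (z : V₁),
      fderiv ℝ (fderiv ℝ f₀) 0
          ((fderiv ℝ (fderiv ℝ v₁) ((0, 0) : V₀ × P) (v, 0) (0, α) : V₁) : V) (z : V)
        = b α (v : V) (z : V) := by
  intro v α z
  clear hdf₀ hL hV₀ hV₁ L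
  set zv : V := (z : V) with hzvdef
  set ι₁ : V₁ →L[ℝ] V := V₁.subtypeL with hι₁def
  -- the trilinear form as a continuous linear map
  set B : P →L[ℝ] V →L[ℝ] V →L[ℝ] ℝ := bTriCLM b with hBdef
  have hB : ∀ (β : P) (x u : V), B β x u = b β x u := fun β x u => rfl
  -- evaluation-at-`zv` gadget
  set Ez : (V →L[ℝ] V →L[ℝ] ℝ) →L[ℝ] V →L[ℝ] ℝ :=
    ContinuousLinearMap.compL ℝ V (V →L[ℝ] ℝ) ℝ (ContinuousLinearMap.apply ℝ ℝ zv) with hEzdef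
  have hEz : ∀ (M : V →L[ℝ] V →L[ℝ] ℝ) (y : V), Ez M y = M y zv := fun M y => rfl
  set Bz : P →L[ℝ] V →L[ℝ] ℝ := Ez.comp B with hBzdef
  have hBz : ∀ (β : P) (x : V), Bz β x = b β x zv := fun β x => by
    simp [hBzdef, hEz, hB]
  -- smoothness of derivatives of f₀
  have hDf₀ : ContDiff ℝ (⊤ : ℕ∞) (fderiv ℝ f₀) := hf₀.fderiv_right (by simp)
  have hA' : ContDiff ℝ (⊤ : ℕ∞) (fderiv ℝ (fderiv ℝ f₀)) := hDf₀.fderiv_right (by simp)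
  -- derivatives of v₁
  have hv₁at : ∀ p ∈ Ω, ContDiffAt ℝ (⊤ : ℕ∞) v₁ p := fun p hp =>
    hv₁.contDiffAt (hΩopen.mem_nhds hp)
  set E := fderiv ℝ v₁ with hEdef
  have hv₁diff : ∀ p ∈ Ω, HasFDerivAt v₁ (E p) p := fun p hp =>
    ((hv₁at p hp).differentiableAt (by simp)).hasFDerivAt
  have hEat : ContDiffAt ℝ (⊤ : ℕ∞) E ((0, 0) : V₀ × P) := (hv₁at _ hΩ0).fderiv_right (by simp)
  set E' := fderiv ℝ E ((0, 0) : V₀ × P) with hE'def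
  have hEdiff : HasFDerivAt E E' ((0, 0) : V₀ × P) :=
    (hEat.differentiableAt (by simp)).hasFDerivAt
  have h00 : v₁ (0, 0) = 0 := hv₁0.self_of_nhds
  have h00' : v₁ (0 : V₀ × P) = 0 := h00
  -- derivative of v₁ in the parameter directions vanishes at the origin
  have hinr : ∀ β : P, E ((0, 0) : V₀ × P) ((0 : V₀), β) = 0 := by
    have h1 : HasFDerivAt (fun β : P => v₁ ((0 : V₀), β))
        ((E ((0, 0) : V₀ × P)).comp (ContinuousLinearMap.inr ℝ V₀ P)) 0 :=
      (hv₁diff _ hΩ0).comp (0 : P) (ContinuousLinearMap.inr ℝ V₀ P).hasFDerivAt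
    have h2 : HasFDerivAt (fun β : P => v₁ ((0 : V₀), β)) (0 : P →L[ℝ] V₁) 0 := by
      refine (hasFDerivAt_const (0 : V₁) (0 : P)).congr_of_eventuallyEq ?_
      filter_upwards [hv₁0] with β hβ using hβ
    intro β
    have h3 := h1.unique h2
    have h4 := congrArg (fun (T : P →L[ℝ] V₁) => T β) h3
    simpa using h4
  -- the map c and its derivative
  set c : V₀ × P → V := fun p => (p.1 : V) + (v₁ p : V) with hcdef
  set c' : (V₀ × P) → (V₀ × P) →L[ℝ] V := fun p =>
    V₀.subtypeL.comp (ContinuousLinearMap.fst ℝ V₀ P) + ι₁.comp (E p) with hc'def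
  have hcdiff : ∀ p ∈ Ω, HasFDerivAt c (c' p) p := by
    intro p hp
    have h1 : HasFDerivAt (fun p : V₀ × P => (p.1 : V))
        (V₀.subtypeL.comp (ContinuousLinearMap.fst ℝ V₀ P)) p :=
      (V₀.subtypeL.comp (ContinuousLinearMap.fst ℝ V₀ P)).hasFDerivAt
    have h2 : HasFDerivAt (fun p : V₀ × P => (v₁ p : V)) (ι₁.comp (E p)) p :=
      ι₁.hasFDerivAt.comp p (hv₁diff p hp)
    exact h1.add h2
  have hc0 : c ((0, 0) : V₀ × P) = 0 := by simp [hcdef, h00', h00]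
  have hinr' : ∀ β : P, E (0 : V₀ × P) ((0 : V₀), β) = 0 := hinr
  have hc'α : c' ((0, 0) : V₀ × P) ((0 : V₀), α) = 0 := by
    simp [hc'def, hinr' α, hinr α]
  -- the direction map w
  set w : V₀ × P → V := fun p => (v : V) + ι₁ (E p ((v, 0) : V₀ × P)) with hwdef
  have hc'v : ∀ p, c' p ((v, 0) : V₀ × P) = w p := by
    intro p; simp [hc'def, hwdef]
  have hDv₁' : E (0 : V₀ × P) ((v, 0) : V₀ × P) = 0 := hDv₁ v
  have hw00 : w ((0, 0) : V₀ × P) = (v : V) := by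
    simp [hwdef, hDv₁', hDv₁ v]
  -- Step 1: the first-order equation Φ = 0 on Ω
  have hfder : ∀ (β : P) (x : V), HasFDerivAt (fun y : V => f (y, β))
      (fderiv ℝ f₀ x - (1 / 2 : ℝ) • (((B β).isBoundedBilinearMap.deriv (x, x)).comp
        ((ContinuousLinearMap.id ℝ V).prod (ContinuousLinearMap.id ℝ V)))) x := by
    intro β x
    have h1 : HasFDerivAt f₀ (fderiv ℝ f₀ x) x := (hf₀.differentiable (by simp) x).hasFDerivAt
    have hd : HasFDerivAt (fun y : V => (y, y))
        ((ContinuousLinearMap.id ℝ V).prod (ContinuousLinearMap.id ℝ V)) x :=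
      ((ContinuousLinearMap.id ℝ V).prod (ContinuousLinearMap.id ℝ V)).hasFDerivAt
    have h2 : HasFDerivAt (fun y : V => B β y y)
        (((B β).isBoundedBilinearMap.deriv (x, x)).comp
          ((ContinuousLinearMap.id ℝ V).prod (ContinuousLinearMap.id ℝ V))) x :=
      ((B β).isBoundedBilinearMap.hasFDerivAt (x, x)).comp (g := fun q : V × V => B β q.1 q.2)
        (f := fun y : V => (y, y)) x hd
    have h3 := h1.sub (h2.const_mul (1 / 2 : ℝ))
    refine h3.congr_of_eventuallyEq (Filter.Eventually.of_forall fun y => ?_)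
    show f (y, β) = f₀ y - 1 / 2 * B β y y
    rw [hf y β, hB]
  set Φ : V₀ × P → ℝ := fun p => ContinuousLinearMap.apply ℝ ℝ zv (fderiv ℝ f₀ (c p))
      - Bz p.2 (c p) with hΦdef
  have hΦ0 : ∀ p ∈ Ω, Φ p = 0 := by
    intro p hp
    have h : fderiv ℝ (fun y : V => f (y, p.2)) (c p) zv = 0 := heq p hp z
    rw [(hfder p.2 (c p)).fderiv] at h
    simp only [ContinuousLinearMap.sub_apply, ContinuousLinearMap.smul_apply,
      ContinuousLinearMap.coe_comp', Function.comp_apply, ContinuousLinearMap.prod_apply,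
      ContinuousLinearMap.coe_id', id_eq, IsBoundedBilinearMap.deriv_apply,
      smul_eq_mul, hB] at h
    have hs : b p.2 zv (c p) = b p.2 (c p) zv := hbsymm _ _ _
    have : Φ p = fderiv ℝ f₀ (c p) zv - b p.2 (c p) zv := by
      simp [hΦdef, hBz]
    rw [this]
    rw [hs] at h
    linarith
  -- Step 2: differentiate Φ in the V₀-direction `v`: K = 0 on Ω
  set K : V₀ × P → ℝ := fun p => Ez (fderiv ℝ (fderiv ℝ f₀) (c p)) (w p) - Bz p.2 (w p)
    with hKdef
  have hK0 : ∀ p ∈ Ω, K p = 0 := by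
    intro p hp
    have hΦ₁ : HasFDerivAt (fun q => ContinuousLinearMap.apply ℝ ℝ zv (fderiv ℝ f₀ (c q)))
        ((ContinuousLinearMap.apply ℝ ℝ zv).comp
          ((fderiv ℝ (fderiv ℝ f₀) (c p)).comp (c' p))) p := by
      have h1 : HasFDerivAt (fderiv ℝ f₀) (fderiv ℝ (fderiv ℝ f₀) (c p)) (c p) :=
        (hDf₀.differentiable (by simp) (c p)).hasFDerivAt
      exact (ContinuousLinearMap.apply ℝ ℝ zv).hasFDerivAt.comp p (h1.comp p (hcdiff p hp))
    have hpair : HasFDerivAt (fun q : V₀ × P => (Bz q.2, c q))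
        ((Bz.comp (ContinuousLinearMap.snd ℝ V₀ P)).prod (c' p)) p :=
      HasFDerivAt.prodMk (Bz.comp (ContinuousLinearMap.snd ℝ V₀ P)).hasFDerivAt (hcdiff p hp)
    have hΦ₂ : HasFDerivAt (fun q : V₀ × P => Bz q.2 (c q))
        ((isBoundedBilinearMap_apply.deriv (Bz p.2, c p)).comp
          ((Bz.comp (ContinuousLinearMap.snd ℝ V₀ P)).prod (c' p))) p :=
      (isBoundedBilinearMap_apply.hasFDerivAt (Bz p.2, c p)).comp
        (g := fun r : (V →L[ℝ] ℝ) × V => r.1 r.2) p hpair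
    have hzero : HasFDerivAt Φ (0 : (V₀ × P) →L[ℝ] ℝ) p := by
      refine (hasFDerivAt_const (0 : ℝ) p).congr_of_eventuallyEq ?_
      filter_upwards [hΩopen.mem_nhds hp] with q hq using hΦ0 q hq
    have huniq := (hΦ₁.sub hΦ₂).unique hzero
    have h := congrArg (fun (T : (V₀ × P) →L[ℝ] ℝ) => T ((v, 0) : V₀ × P)) huniq
    simp only [ContinuousLinearMap.sub_apply, ContinuousLinearMap.coe_comp',
      Function.comp_apply, ContinuousLinearMap.prod_apply, ContinuousLinearMap.coe_snd',
      IsBoundedBilinearMap.deriv_apply, ContinuousLinearMap.zero_apply, map_zero,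
      ContinuousLinearMap.apply_apply, hc'v p] at h
    simpa [hKdef, hEz] using h
  -- Step 3: differentiate K in the parameter direction `α` at the origin
  set A'' := fderiv ℝ (fderiv ℝ (fderiv ℝ f₀)) 0 with hA''def
  have hg₁ : HasFDerivAt (fun p => Ez (fderiv ℝ (fderiv ℝ f₀) (c p)))
      (Ez.comp (A''.comp (c' ((0, 0) : V₀ × P)))) ((0, 0) : V₀ × P) := by
    have h1 : HasFDerivAt (fderiv ℝ (fderiv ℝ f₀)) A'' (c ((0, 0) : V₀ × P)) := by
      rw [hc0]
      exact (hA'.differentiable (by simp) 0).hasFDerivAt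
    exact Ez.hasFDerivAt.comp _ (h1.comp (g := fderiv ℝ (fderiv ℝ f₀)) (f := c) _ (hcdiff _ hΩ0))
  set w' : (V₀ × P) →L[ℝ] V :=
    ι₁.comp ((ContinuousLinearMap.apply ℝ V₁ ((v, 0) : V₀ × P)).comp E') with hw'def
  have hg₂ : HasFDerivAt w w' ((0, 0) : V₀ × P) := by
    have h1 : HasFDerivAt (fun p : V₀ × P => E p ((v, 0) : V₀ × P))
        ((ContinuousLinearMap.apply ℝ V₁ ((v, 0) : V₀ × P)).comp E') ((0, 0) : V₀ × P) :=
      (ContinuousLinearMap.apply ℝ V₁ ((v, 0) : V₀ × P)).hasFDerivAt.comp _ hEdiff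
    exact (ι₁.hasFDerivAt.comp _ h1).const_add ((v : V))
  have hK₁ : HasFDerivAt (fun p => Ez (fderiv ℝ (fderiv ℝ f₀) (c p)) (w p))
      ((isBoundedBilinearMap_apply.deriv
          (Ez (fderiv ℝ (fderiv ℝ f₀) (c ((0, 0) : V₀ × P))), w ((0, 0) : V₀ × P))).comp
        ((Ez.comp (A''.comp (c' ((0, 0) : V₀ × P)))).prod w')) ((0, 0) : V₀ × P) :=
    (isBoundedBilinearMap_apply.hasFDerivAt _).comp
      (g := fun r : (V →L[ℝ] ℝ) × V => r.1 r.2) _ (HasFDerivAt.prodMk hg₁ hg₂)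
  have hpair₂ : HasFDerivAt (fun p : V₀ × P => (Bz p.2, w p))
      ((Bz.comp (ContinuousLinearMap.snd ℝ V₀ P)).prod w') ((0, 0) : V₀ × P) :=
    HasFDerivAt.prodMk (Bz.comp (ContinuousLinearMap.snd ℝ V₀ P)).hasFDerivAt hg₂
  have hK₂ : HasFDerivAt (fun p : V₀ × P => Bz p.2 (w p))
      ((isBoundedBilinearMap_apply.deriv (Bz (0 : P), w ((0, 0) : V₀ × P))).comp
        ((Bz.comp (ContinuousLinearMap.snd ℝ V₀ P)).prod w')) ((0, 0) : V₀ × P) :=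
    (isBoundedBilinearMap_apply.hasFDerivAt _).comp
      (g := fun r : (V →L[ℝ] ℝ) × V => r.1 r.2) _ hpair₂
  have hKzero : HasFDerivAt K (0 : (V₀ × P) →L[ℝ] ℝ) ((0, 0) : V₀ × P) := by
    refine (hasFDerivAt_const (0 : ℝ) _).congr_of_eventuallyEq ?_
    filter_upwards [hΩopen.mem_nhds hΩ0] with q hq using hK0 q hq
  have huniq2 := ((hK₁.sub hK₂).unique hKzero)
  have h := congrArg (fun (T : (V₀ × P) →L[ℝ] ℝ) => T (((0 : V₀), α) : V₀ × P)) huniq2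
  simp only [ContinuousLinearMap.sub_apply, ContinuousLinearMap.coe_comp',
    Function.comp_apply, ContinuousLinearMap.prod_apply, ContinuousLinearMap.coe_snd',
    IsBoundedBilinearMap.deriv_apply, ContinuousLinearMap.zero_apply, map_zero,
    ContinuousLinearMap.apply_apply, hc'α, hc0, hw00] at h
  -- h : Ez (fderiv ℝ (fderiv ℝ f₀) 0) (w' (0, α)) + 0 - (0 + Bz α ↑v) = 0 (roughly)
  -- symmetry of the second derivative of v₁
  have hev : ∀ᶠ y in 𝓝 ((0, 0) : V₀ × P), HasFDerivAt v₁ (E y) y := by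
    filter_upwards [hΩopen.mem_nhds hΩ0] with q hq using hv₁diff q hq
  have hsymm := second_derivative_symmetric_of_eventually hev hEdiff
    ((v, 0) : V₀ × P) (((0 : V₀), α) : V₀ × P)
  rw [← hE'def] at *
  rw [hsymm]
  have hw'α : w' (((0 : V₀), α) : V₀ × P) = ι₁ (E' (((0 : V₀), α) : V₀ × P) ((v, 0) : V₀ × P)) := by
    simp [hw'def]
  rw [hw'α] at h
  rw [hBz] at h
  have hfin : fderiv ℝ (fderiv ℝ f₀) 0 (ι₁ (E' (((0 : V₀), α) : V₀ × P) ((v, 0) : V₀ × P))) zv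
      = b α (v : V) zv := by
    have := hEz (fderiv ℝ (fderiv ℝ f₀) 0) (ι₁ (E' (((0 : V₀), α) : V₀ × P) ((v, 0) : V₀ × P)))
    linarith [h]
  exact hfin
end

section
/- Let V be a finite-dimensional real inner product space, P a finite-dimensional real normed space, f₀ : V → ℝ smooth with df₀(0) = 0, and for each α ∈ P let b_α be a symmetric bilinear form on V depending linearly on α; define f(v, α) := f₀(v) − (1/2) b_α(v, v). Let L be the symmetric operator with ⟨L v, w⟩ = d²f₀(0)(v, w), set V₀ := ker L, V₁ := V₀^⊥, ℙ the orthogonal projection onto V₀, and let v₁ be a smooth map from a neighborhood of (0,0) in V₀ × P into V₁ with v₁(0, α) = 0 for α near 0, D_{V₀} v₁(0,0) = 0, satisfying D_v f(v₀ + v₁(v₀, α), α)(z) = 0 for all z ∈ V₁. Define the reduced bifurcation map B(v₀, α) := ℙ ∇_V f(v₀ + v₁(v₀, α), α). Then: (i) D_{V₀} B(0, 0) = 0; and (ii) ⟨ D²_{V₀, α} B(0, 0)·(v₀, α), w₀ ⟩ = − b_α(v₀, w₀) for all v₀, w₀ ∈ V₀ and α ∈ P. -/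
set_option maxHeartbeats 1000000
set_option synthInstance.maxHeartbeats 400000


open Filter Topology RealInnerProductSpace

/-- A `P →ₗ V →ₗ V →ₗ ℝ` trilinear map on finite-dimensional spaces upgrades to a
continuous trilinear map. -/
noncomputable def LyapunovSchmidtAux.toCLM3 {P V : Type*}
    [NormedAddCommGroup P] [NormedSpace ℝ P] [FiniteDimensional ℝ P]
    [NormedAddCommGroup V] [NormedSpace ℝ V] [FiniteDimensional ℝ V]
    (b : P →ₗ[ℝ] V →ₗ[ℝ] V →ₗ[ℝ] ℝ) : P →L[ℝ] V →L[ℝ] V →L[ℝ] ℝ :=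
  LinearMap.toContinuousLinearMap
    { toFun := fun α => LinearMap.toContinuousLinearMap
        { toFun := fun v => LinearMap.toContinuousLinearMap (b α v)
          map_add' := fun x y => by ext w; simp
          map_smul' := fun c x => by ext w; simp }
      map_add' := fun x y => by ext v w; simp
      map_smul' := fun c x => by ext v w; simp }

@[simp] lemma LyapunovSchmidtAux.toCLM3_apply {P V : Type*}
    [NormedAddCommGroup P] [NormedSpace ℝ P] [FiniteDimensional ℝ P]
    [NormedAddCommGroup V] [NormedSpace ℝ V] [FiniteDimensional ℝ V]
    (b : P →ₗ[ℝ] V →ₗ[ℝ] V →ₗ[ℝ] ℝ) (α : P) (v w : V) :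
    LyapunovSchmidtAux.toCLM3 b α v w = b α v w := by
  simp [LyapunovSchmidtAux.toCLM3]


private lemma LyapunovSchmidtAux.hasFDerivAt_clm {E F : Type*}
    [NormedAddCommGroup E] [NormedSpace ℝ E] [NormedAddCommGroup F] [NormedSpace ℝ F]
    (e : E →L[ℝ] F) (g : E → F) (hg : ∀ x, g x = e x) (x : E) : HasFDerivAt g e x := by
  have h : g = ⇑e := funext hg
  rw [h]
  exact e.hasFDerivAt

private lemma LyapunovSchmidtAux.hasFDerivAt_comp' {E F G : Type*}
    [NormedAddCommGroup E] [NormedSpace ℝ E] [NormedAddCommGroup F] [NormedSpace ℝ F]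
    [NormedAddCommGroup G] [NormedSpace ℝ G]
    {g : F → G} {f : E → F} (h : E → G) (hh : ∀ x, h x = g (f x)) (x : E)
    {g' : F →L[ℝ] G} {f' : E →L[ℝ] F}
    (hg : HasFDerivAt g g' (f x)) (hf : HasFDerivAt f f' x) :
    HasFDerivAt h (g'.comp f') x := by
  have h2 : h = g ∘ f := funext hh
  rw [h2]
  exact hg.comp x hf

/-- Leading derivatives of the Lyapunov–Schmidt reduced bifurcation map: for
`f(v, α) = f₀(v) - (1/2)·b_α(v, v)` with `df₀(0) = 0`, `L` the symmetric operator of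
`d²f₀(0)`, `V₀ = ker L`, `V₁ = V₀^⊥`, `ℙ` the orthogonal projection onto `V₀`, `v₁` the smooth
implicit solution, and `B(v₀, α) = ℙ ∇_V f(v₀ + v₁(v₀,α), α)` the reduced bifurcation map,
one has (i) `D_{V₀} B(0,0) = 0` and
(ii) `⟨D²_{V₀,α} B(0,0)·(v₀, α), w₀⟩ = -b_α(v₀, w₀)` for `v₀, w₀ ∈ V₀`, `α ∈ P`. -/
theorem lyapunov_schmidt_reduced_map_derivatives
    {V : Type*} [NormedAddCommGroup V] [InnerProductSpace ℝ V] [FiniteDimensional ℝ V]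
    {P : Type*} [NormedAddCommGroup P] [NormedSpace ℝ P] [FiniteDimensional ℝ P]
    (f₀ : V → ℝ) (hf₀ : ContDiff ℝ (⊤ : ℕ∞) f₀) (hdf₀ : fderiv ℝ f₀ 0 = 0)
    (b : P →ₗ[ℝ] V →ₗ[ℝ] V →ₗ[ℝ] ℝ)
    (hbsymm : ∀ (α : P) (v w : V), b α v w = b α w v)
    (f : V × P → ℝ) (hf : ∀ (v : V) (α : P), f (v, α) = f₀ v - (1 / 2) * b α v v)
    (L : V →ₗ[ℝ] V)
    (hL : ∀ v w : V, ⟪L v, w⟫ = fderiv ℝ (fderiv ℝ f₀) 0 v w)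
    (V₀ : Submodule ℝ V) (hV₀ : V₀ = LinearMap.ker L)
    (V₁ : Submodule ℝ V) (hV₁ : V₁ = V₀ᗮ)
    (Ω : Set (V₀ × P)) (hΩopen : IsOpen Ω) (hΩ0 : ((0, 0) : V₀ × P) ∈ Ω)
    (v₁ : V₀ × P → V₁) (hv₁ : ContDiffOn ℝ (⊤ : ℕ∞) v₁ Ω)
    (hv₁0 : ∀ᶠ α in 𝓝 (0 : P), v₁ (0, α) = 0)
    (hDv₁ : ∀ v : V₀, fderiv ℝ v₁ ((0, 0) : V₀ × P) (v, 0) = 0)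
    (heq : ∀ p ∈ Ω, ∀ z : V₁,
      fderiv ℝ (fun v : V => f (v, p.2)) ((p.1 : V) + (v₁ p : V)) (z : V) = 0)
    (B : V₀ × P → V₀)
    (hB : ∀ p : V₀ × P,
      B p = Submodule.orthogonalProjection V₀
        (gradient (fun v : V => f (v, p.2)) ((p.1 : V) + (v₁ p : V)))) :
    (fderiv ℝ (fun v₀ : V₀ => B (v₀, 0)) 0 = 0) ∧
    (∀ (v₀ w₀ : V₀) (α : P),
      ⟪((fderiv ℝ (fderiv ℝ B) ((0, 0) : V₀ × P) (v₀, 0) (0, α) : V₀) : V), (w₀ : V)⟫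
        = -(b α (v₀ : V) (w₀ : V))) := by
  classical
  obtain ⟨bc, hbc⟩ : ∃ bc : P →L[ℝ] V →L[ℝ] V →L[ℝ] ℝ,
      ∀ (α : P) (v w : V), bc α v w = b α v w :=
    ⟨LyapunovSchmidtAux.toCLM3 b, fun α v w => LyapunovSchmidtAux.toCLM3_apply b α v w⟩
  set ψ : V₀ × P → V := fun p => (p.1 : V) + (v₁ p : V) with hψdef
  have hΩnhds : Ω ∈ 𝓝 ((0, 0) : V₀ × P) := hΩopen.mem_nhds hΩ0
  -- smoothness of ψ
  have hψΩ : ContDiffOn ℝ (⊤ : ℕ∞) ψ Ω := by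
    apply ContDiffOn.add
    · exact ((V₀.subtypeL.comp (ContinuousLinearMap.fst ℝ V₀ P)).contDiff).contDiffOn
    · exact V₁.subtypeL.contDiff.comp_contDiffOn hv₁
  have hψat : ContDiffAt ℝ (⊤ : ℕ∞) ψ (0, 0) := hψΩ.contDiffAt hΩnhds
  have hv₁at : ContDiffAt ℝ (⊤ : ℕ∞) v₁ (0, 0) := hv₁.contDiffAt hΩnhds
  have hv₁00 : v₁ (0, 0) = 0 := hv₁0.self_of_nhds
  have hψ00 : ψ (0, 0) = 0 := by
    have hv₁00' : v₁ 0 = 0 := hv₁00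
    simp [hψdef, hv₁00', hv₁00]
  have hψdiff : DifferentiableAt ℝ ψ (0, 0) := hψat.differentiableAt (by simp)
  have hv₁diff : DifferentiableAt ℝ v₁ (0, 0) := hv₁at.differentiableAt (by simp)
  -- derivative of v₁ in the P-direction vanishes
  have hDv₁α : ∀ α : P, fderiv ℝ v₁ ((0, 0) : V₀ × P) (0, α) = 0 := by
    intro α
    have h1 : HasFDerivAt (fun β : P => v₁ (0, β))
        ((fderiv ℝ v₁ ((0, 0) : V₀ × P)).comp (ContinuousLinearMap.inr ℝ V₀ P)) 0 :=
      hv₁diff.hasFDerivAt.comp 0 (ContinuousLinearMap.inr ℝ V₀ P).hasFDerivAt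
    have h2 : fderiv ℝ (fun β : P => v₁ (0, β)) 0 = 0 := by
      have heq' : (fun β : P => v₁ (0, β)) =ᶠ[𝓝 (0 : P)] fun _ => (0 : V₁) := hv₁0
      rw [heq'.fderiv_eq, fderiv_fun_const]
      rfl
    have h3 := h1.fderiv
    rw [h2] at h3
    have := congrArg (fun (T : P →L[ℝ] V₁) => T α) h3.symm
    simpa using this
  -- derivative of ψ at the origin
  have hDψ : ∀ (u : V₀) (β : P), fderiv ℝ ψ ((0, 0) : V₀ × P) (u, β)
      = (u : V) + (fderiv ℝ v₁ ((0, 0) : V₀ × P) (u, β) : V) := by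
    intro u β
    have h1 : HasFDerivAt ψ
        ((V₀.subtypeL.comp (ContinuousLinearMap.fst ℝ V₀ P))
          + V₁.subtypeL.comp (fderiv ℝ v₁ ((0, 0) : V₀ × P))) (0, 0) := by
      exact (V₀.subtypeL.comp (ContinuousLinearMap.fst ℝ V₀ P)).hasFDerivAt.add
        (V₁.subtypeL.hasFDerivAt.comp _ hv₁diff.hasFDerivAt)
    rw [h1.fderiv]
    simp
  have hDψ1 : ∀ u : V₀, fderiv ℝ ψ ((0, 0) : V₀ × P) (u, 0) = (u : V) := by
    intro u; rw [hDψ, hDv₁ u]; simp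
  have hDψ2 : ∀ α : P, fderiv ℝ ψ ((0, 0) : V₀ × P) (0, α) = 0 := by
    intro α; rw [hDψ, hDv₁α]; simp
  -- derivative of f in the V-variable
  have hQuad : ∀ (α : P) (x : V),
      HasFDerivAt (fun v : V => f (v, α)) (fderiv ℝ f₀ x - bc α x) x := by
    intro α x
    have h1 : HasFDerivAt (fun v : V => bc α v v)
        ((bc α x).comp (ContinuousLinearMap.id ℝ V) + (bc α).flip x) x :=
      (bc α).hasFDerivAt.clm_apply (hasFDerivAt_id x)
    have h2 : HasFDerivAt (fun v : V => f₀ v - (1 / 2) * bc α v v)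
        (fderiv ℝ f₀ x - (1 / 2 : ℝ) • ((bc α x).comp (ContinuousLinearMap.id ℝ V)
          + (bc α).flip x)) x :=
      (hf₀.differentiable (by simp) x).hasFDerivAt.sub (h1.const_mul (1 / 2 : ℝ))
    have h3 : (fun v : V => f (v, α)) = fun v : V => f₀ v - (1 / 2) * bc α v v := by
      funext v; rw [hf]; rw [hbc]
    rw [h3]
    convert h2 using 1
    ext w
    have hsy : bc α w x = bc α x w := by rw [hbc, hbc, hbsymm]
    simp [hsy]
    ring
  -- B in explicit form
  have hBf : ∀ p : V₀ × P, B p = Submodule.orthogonalProjection V₀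
      ((InnerProductSpace.toDual ℝ V).symm (fderiv ℝ f₀ (ψ p) - bc p.2 (ψ p))) := by
    intro p
    rw [hB p]
    have : gradient (fun v : V => f (v, p.2)) ((p.1 : V) + (v₁ p : V))
        = (InnerProductSpace.toDual ℝ V).symm (fderiv ℝ f₀ (ψ p) - bc p.2 (ψ p)) := by
      rw [gradient, (hQuad p.2 (ψ p)).fderiv]
    rw [this]
  -- pairing formula
  have hpair : ∀ (w₀ : V₀) (p : V₀ × P),
      (inner ℝ w₀ (B p) : ℝ) = fderiv ℝ f₀ (ψ p) ↑w₀ - bc p.2 (ψ p) ↑w₀ := by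
    intro w₀ p
    rw [hBf p, Submodule.inner_orthogonalProjection_eq_of_mem_left, real_inner_comm,
      InnerProductSpace.toDual_symm_apply]
    simp
  -- smoothness of B on Ω
  have hBsm : ContDiffOn ℝ (⊤ : ℕ∞) B Ω := by
    have hfs : ContDiffOn ℝ (⊤ : ℕ∞) (fun p : V₀ × P => fderiv ℝ f₀ (ψ p) - bc p.2 (ψ p)) Ω := by
      apply ContDiffOn.sub
      · exact (hf₀.fderiv_right (m := (⊤ : ℕ∞)) (by simp)).comp_contDiffOn hψΩ
      · have hbc2 : ContDiffOn ℝ (⊤ : ℕ∞) (fun p : V₀ × P => bc p.2) Ω := by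
          have h1 : ContDiff ℝ (⊤ : ℕ∞) (⇑bc) := by fun_prop
          have h2 : ContDiff ℝ (⊤ : ℕ∞) (Prod.snd : V₀ × P → P) := contDiff_snd
          exact (h1.comp h2).contDiffOn
        exact ContDiffOn.clm_apply hbc2 hψΩ
    have houter : ContDiff ℝ (⊤ : ℕ∞) (fun ℓ : V →L[ℝ] ℝ => (Submodule.orthogonalProjection V₀
        ((InnerProductSpace.toDual ℝ V).symm ℓ) : V₀)) :=
      (Submodule.orthogonalProjection V₀).contDiff.comp (InnerProductSpace.toDual ℝ V).symm.contDiff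
    exact (houter.comp_contDiffOn hfs).congr (fun p _ => hBf p)
  have hBat : ContDiffAt ℝ (⊤ : ℕ∞) B (0, 0) := hBsm.contDiffAt hΩnhds
  have hBdiffΩ : ∀ p ∈ Ω, DifferentiableAt ℝ B p := fun p hp =>
    (hBsm.contDiffAt (hΩopen.mem_nhds hp)).differentiableAt (by simp)
  -- the symmetric second derivative kills V₀ directions
  have hLker : ∀ w₀ : V₀, L ↑w₀ = 0 := by
    intro w₀
    have hmem : (↑w₀ : V) ∈ LinearMap.ker L := by rw [← hV₀]; exact w₀.2
    exact LinearMap.mem_ker.mp hmem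
  have hsnd : HasFDerivAt (fderiv ℝ f₀) (fderiv ℝ (fderiv ℝ f₀) 0) 0 :=
    (((hf₀.fderiv_right (m := (⊤ : ℕ∞)) (by simp)).differentiable (by simp)) 0).hasFDerivAt
  have hsymm : ∀ z w : V, fderiv ℝ (fderiv ℝ f₀) 0 z w = fderiv ℝ (fderiv ℝ f₀) 0 w z :=
    fun z w => second_derivative_symmetric
      (fun y => ((hf₀.differentiable (by simp)) y).hasFDerivAt) hsnd z w
  have hkill : ∀ (w₀ : V₀) (z : V), fderiv ℝ (fderiv ℝ f₀) 0 z ↑w₀ = 0 := by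
    intro w₀ z
    rw [hsymm z ↑w₀, ← hL, hLker w₀, inner_zero_left]
  -- common data for both parts
  have hj : HasFDerivAt (fun v₀ : V₀ => ((v₀, 0) : V₀ × P))
      (ContinuousLinearMap.inl ℝ V₀ P) 0 := (ContinuousLinearMap.inl ℝ V₀ P).hasFDerivAt
  have hBdiff0 : DifferentiableAt ℝ B (0, 0) := hBat.differentiableAt (by simp)
  have hB0 : HasFDerivAt (fun v₀ : V₀ => B (v₀, 0))
      ((fderiv ℝ B (0, 0)).comp (ContinuousLinearMap.inl ℝ V₀ P)) 0 :=
    HasFDerivAt.comp (g := B) (f := fun v₀ : V₀ => ((v₀, 0) : V₀ × P)) 0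
      hBdiff0.hasFDerivAt hj
  constructor
  · -- part (i)
    have key : ∀ w₀ u : V₀,
        (inner ℝ w₀ ((fderiv ℝ (fun v₀ : V₀ => B (v₀, 0)) 0) u) : ℝ) = 0 := by
      intro w₀ u
      set c : V₀ →L[ℝ] ℝ := innerSL ℝ w₀ with hcdef
      have hc1 : HasFDerivAt (fun v₀ : V₀ => c (B (v₀, 0)))
          (c.comp ((fderiv ℝ B (0, 0)).comp (ContinuousLinearMap.inl ℝ V₀ P))) 0 :=
        c.hasFDerivAt.comp 0 hB0
      have hfun' : (fun v₀ : V₀ => c (B (v₀, 0)))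
          = fun v₀ : V₀ => fderiv ℝ f₀ (ψ (v₀, 0)) ↑w₀ := by
        funext v₀
        have h := hpair w₀ (v₀, 0)
        have hc0 : c (B (v₀, 0)) = (inner ℝ w₀ (B (v₀, 0)) : ℝ) := rfl
        rw [hc0, h]
        simp
      have hψ0 : HasFDerivAt (fun v₀ : V₀ => ψ (v₀, 0))
          ((fderiv ℝ ψ ((0, 0) : V₀ × P)).comp (ContinuousLinearMap.inl ℝ V₀ P)) 0 :=
        HasFDerivAt.comp (g := ψ) (f := fun v₀ : V₀ => ((v₀, 0) : V₀ × P)) 0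
          hψdiff.hasFDerivAt hj
      have hΦ : HasFDerivAt (fderiv ℝ f₀) (fderiv ℝ (fderiv ℝ f₀) 0) (ψ (0, 0)) := by
        rw [hψ00]; exact hsnd
      have hT : HasFDerivAt (fun v₀ : V₀ => (fderiv ℝ f₀ (ψ (v₀, 0))) ↑w₀)
          (((fderiv ℝ f₀ (ψ ((0 : V₀), (0 : P)))).comp (0 : V₀ →L[ℝ] V)) +
            ((fderiv ℝ (fderiv ℝ f₀) 0).comp
              ((fderiv ℝ ψ ((0, 0) : V₀ × P)).comp
                (ContinuousLinearMap.inl ℝ V₀ P))).flip ↑w₀) 0 :=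
        (hΦ.comp (0 : V₀) hψ0).clm_apply (hasFDerivAt_const (↑w₀ : V) (0 : V₀))
      calc (inner ℝ w₀ ((fderiv ℝ (fun v₀ : V₀ => B (v₀, 0)) 0) u) : ℝ)
          = (fderiv ℝ (fun v₀ : V₀ => c (B (v₀, 0))) 0) u := by
            rw [hB0.fderiv, hc1.fderiv]; rfl
        _ = (fderiv ℝ (fun v₀ : V₀ => fderiv ℝ f₀ (ψ (v₀, 0)) ↑w₀) 0) u := by rw [hfun']
        _ = 0 := by
            rw [hT.fderiv]
            simp [ContinuousLinearMap.add_apply, ContinuousLinearMap.comp_apply,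
              ContinuousLinearMap.flip_apply, hDψ1, hkill]
    apply ContinuousLinearMap.ext
    intro u
    have h := key ((fderiv ℝ (fun v₀ : V₀ => B (v₀, 0)) 0) u) u
    rw [ContinuousLinearMap.zero_apply]
    exact inner_self_eq_zero.mp h
  · -- part (ii)
    intro v₀ w₀ α
    set c : V₀ →L[ℝ] ℝ := innerSL ℝ w₀ with hcdef
    set q : V₀ × P → ℝ := fun p => fderiv ℝ f₀ (ψ p) ↑w₀ - bc p.2 (ψ p) ↑w₀ with hqdef
    have hqB : (fun p : V₀ × P => c (B p)) = q := by
      funext p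
      have hc0 : c (B p) = (inner ℝ w₀ (B p) : ℝ) := rfl
      rw [hc0, hpair w₀ p]
    -- relate the second derivative of q to that of B
    have hDqB : (fun p : V₀ × P => fderiv ℝ q p) =ᶠ[𝓝 ((0, 0) : V₀ × P)]
        (fun p : V₀ × P => c.comp (fderiv ℝ B p)) := by
      filter_upwards [hΩopen.eventually_mem hΩ0] with p hp
      rw [← hqB]
      exact (c.hasFDerivAt.comp p (hBdiffΩ p hp).hasFDerivAt).fderiv
    have hfdBdiff : DifferentiableAt ℝ (fderiv ℝ B) ((0, 0) : V₀ × P) :=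
      (hBat.fderiv_right (m := (⊤ : ℕ∞)) (by simp)).differentiableAt (by simp)
    have hM : HasFDerivAt (fun p : V₀ × P => c.comp (fderiv ℝ B p))
        ((ContinuousLinearMap.compL ℝ (V₀ × P) V₀ ℝ c).comp
          (fderiv ℝ (fderiv ℝ B) ((0, 0) : V₀ × P))) ((0, 0) : V₀ × P) :=
      (ContinuousLinearMap.compL ℝ (V₀ × P) V₀ ℝ c).hasFDerivAt.comp _
        hfdBdiff.hasFDerivAt
    have hD2 : fderiv ℝ (fderiv ℝ q) ((0, 0) : V₀ × P)
        = (ContinuousLinearMap.compL ℝ (V₀ × P) V₀ ℝ c).comp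
            (fderiv ℝ (fderiv ℝ B) ((0, 0) : V₀ × P)) := by
      rw [hDqB.fderiv_eq]
      exact hM.fderiv
    have hgoal1 : (⟪((fderiv ℝ (fderiv ℝ B) ((0, 0) : V₀ × P) (v₀, 0) (0, α) : V₀) : V),
        (↑w₀ : V)⟫ : ℝ) = fderiv ℝ (fderiv ℝ q) ((0, 0) : V₀ × P) (v₀, 0) (0, α) := by
      rw [hD2, real_inner_comm]
      rfl
    -- swap evaluation and differentiation
    have hqat : ContDiffAt ℝ (⊤ : ℕ∞) q ((0, 0) : V₀ × P) := by
      rw [← hqB]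
      exact ContDiffAt.comp (g := ⇑c) (f := B) _ c.contDiff.contDiffAt hBat
    have hqfd : DifferentiableAt ℝ (fderiv ℝ q) ((0, 0) : V₀ × P) :=
      (hqat.fderiv_right (m := (⊤ : ℕ∞)) (by simp)).differentiableAt (by simp)
    have happ : HasFDerivAt (fun p : V₀ × P => fderiv ℝ q p ((0 : V₀), α))
        ((ContinuousLinearMap.apply ℝ ℝ (((0 : V₀), α) : V₀ × P)).comp
          (fderiv ℝ (fderiv ℝ q) ((0, 0) : V₀ × P))) ((0, 0) : V₀ × P) :=
      (ContinuousLinearMap.apply ℝ ℝ (((0 : V₀), α) : V₀ × P)).hasFDerivAt.comp _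
        hqfd.hasFDerivAt
    have hswap : fderiv ℝ (fderiv ℝ q) ((0, 0) : V₀ × P) (v₀, 0) (0, α)
        = fderiv ℝ (fun p : V₀ × P => fderiv ℝ q p ((0 : V₀), α))
            ((0, 0) : V₀ × P) (v₀, 0) := by
      rw [happ.fderiv]
      rfl
    -- explicit local formula for the derivative of q in the direction (0, α)
    have hrev : (fun p : V₀ × P => fderiv ℝ q p ((0 : V₀), α)) =ᶠ[𝓝 ((0, 0) : V₀ × P)]
        (fun p : V₀ × P =>
          fderiv ℝ (fderiv ℝ f₀) (ψ p) (fderiv ℝ ψ p ((0 : V₀), α)) ↑w₀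
            - (bc p.2 (fderiv ℝ ψ p ((0 : V₀), α)) ↑w₀ + bc α (ψ p) ↑w₀)) := by
      filter_upwards [hΩopen.eventually_mem hΩ0] with p hp
      have hψp : HasFDerivAt ψ (fderiv ℝ ψ p) p :=
        ((hψΩ.contDiffAt (hΩopen.mem_nhds hp)).differentiableAt (by simp)).hasFDerivAt
      have hfp : HasFDerivAt (fderiv ℝ f₀) (fderiv ℝ (fderiv ℝ f₀) (ψ p)) (ψ p) :=
        (((hf₀.fderiv_right (m := (⊤ : ℕ∞)) (by simp)).differentiable (by simp)) (ψ p)).hasFDerivAt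
      have ht1 : HasFDerivAt (fun p : V₀ × P => fderiv ℝ f₀ (ψ p) ↑w₀)
          (((fderiv ℝ f₀ (ψ p)).comp (0 : (V₀ × P) →L[ℝ] V))
            + ((fderiv ℝ (fderiv ℝ f₀) (ψ p)).comp (fderiv ℝ ψ p)).flip ↑w₀) p :=
        (hfp.comp p hψp).clm_apply (hasFDerivAt_const (↑w₀ : V) p)
      have hcbc : HasFDerivAt (fun p : V₀ × P => bc p.2)
          (bc.comp (ContinuousLinearMap.snd ℝ V₀ P)) p := by
        have h : (fun p : V₀ × P => bc p.2)
            = ⇑(bc.comp (ContinuousLinearMap.snd ℝ V₀ P)) := rfl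
        rw [h]
        exact ContinuousLinearMap.hasFDerivAt _
      have ht2 : HasFDerivAt (fun p : V₀ × P => bc p.2 (ψ p) ↑w₀)
          (((bc p.2 (ψ p)).comp (0 : (V₀ × P) →L[ℝ] V))
            + ((bc p.2).comp (fderiv ℝ ψ p)
                + (bc.comp (ContinuousLinearMap.snd ℝ V₀ P)).flip (ψ p)).flip ↑w₀) p :=
        (hcbc.clm_apply hψp).clm_apply (hasFDerivAt_const (↑w₀ : V) p)
      have hq' : HasFDerivAt q
          ((((fderiv ℝ f₀ (ψ p)).comp (0 : (V₀ × P) →L[ℝ] V))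
            + ((fderiv ℝ (fderiv ℝ f₀) (ψ p)).comp (fderiv ℝ ψ p)).flip ↑w₀)
          - (((bc p.2 (ψ p)).comp (0 : (V₀ × P) →L[ℝ] V))
            + ((bc p.2).comp (fderiv ℝ ψ p)
                + (bc.comp (ContinuousLinearMap.snd ℝ V₀ P)).flip (ψ p)).flip ↑w₀)) p :=
        ht1.sub ht2
      rw [hq'.fderiv]
      simp [ContinuousLinearMap.add_apply, ContinuousLinearMap.sub_apply,
        ContinuousLinearMap.comp_apply, ContinuousLinearMap.flip_apply]
    -- differentiate the explicit formula at the origin in the direction (v₀, 0)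
    have hψfd : DifferentiableAt ℝ (fderiv ℝ ψ) ((0, 0) : V₀ × P) :=
      (hψat.fderiv_right (m := (⊤ : ℕ∞)) (by simp)).differentiableAt (by simp)
    set Dψ₀ : (V₀ × P) →L[ℝ] V := fderiv ℝ ψ ((0, 0) : V₀ × P) with hDψ₀def
    set D1 : (V₀ × P) →L[ℝ] V :=
      Dψ₀.comp (0 : (V₀ × P) →L[ℝ] (V₀ × P))
        + (fderiv ℝ (fderiv ℝ ψ) ((0, 0) : V₀ × P)).flip (((0 : V₀), α) : V₀ × P)
      with hD1def
    set H2 : V →L[ℝ] V →L[ℝ] ℝ := fderiv ℝ (fderiv ℝ f₀) (ψ ((0, 0) : V₀ × P)) with hH2def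
    set C2 : (V₀ × P) →L[ℝ] V →L[ℝ] V →L[ℝ] ℝ :=
      (fderiv ℝ (fderiv ℝ (fderiv ℝ f₀)) (ψ ((0, 0) : V₀ × P))).comp Dψ₀ with hC2def
    have hd1 : HasFDerivAt (fun p : V₀ × P => fderiv ℝ ψ p ((0 : V₀), α)) D1
        ((0, 0) : V₀ × P) :=
      hψfd.hasFDerivAt.clm_apply
        (hasFDerivAt_const (((0 : V₀), α) : V₀ × P) ((0, 0) : V₀ × P))
    have h3d : Differentiable ℝ (fderiv ℝ (fderiv ℝ f₀)) :=
      ((hf₀.fderiv_right (m := (⊤ : ℕ∞)) (by simp)).fderiv_right (m := (⊤ : ℕ∞)) (by simp)).differentiable (by simp)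
    have hc2 : HasFDerivAt (fun p : V₀ × P => fderiv ℝ (fderiv ℝ f₀) (ψ p)) C2
        ((0, 0) : V₀ × P) :=
      HasFDerivAt.comp (g := fderiv ℝ (fderiv ℝ f₀)) (f := ψ) _ (h3d (ψ ((0, 0) : V₀ × P))).hasFDerivAt hψdiff.hasFDerivAt
    have hs1 : HasFDerivAt
        (fun p : V₀ × P => fderiv ℝ (fderiv ℝ f₀) (ψ p) (fderiv ℝ ψ p ((0 : V₀), α)) ↑w₀)
        (((H2 (Dψ₀ ((0 : V₀), α))).comp (0 : (V₀ × P) →L[ℝ] V))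
          + (H2.comp D1 + C2.flip (Dψ₀ ((0 : V₀), α))).flip ↑w₀)
        ((0, 0) : V₀ × P) :=
      (hc2.clm_apply hd1).clm_apply (hasFDerivAt_const (↑w₀ : V) _)
    have hcbc0 : HasFDerivAt (fun p : V₀ × P => bc p.2)
        (bc.comp (ContinuousLinearMap.snd ℝ V₀ P)) ((0, 0) : V₀ × P) := by
      have h : (fun p : V₀ × P => bc p.2)
          = ⇑(bc.comp (ContinuousLinearMap.snd ℝ V₀ P)) := rfl
      rw [h]
      exact ContinuousLinearMap.hasFDerivAt _
    have hs2a : HasFDerivAt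
        (fun p : V₀ × P => bc p.2 (fderiv ℝ ψ p ((0 : V₀), α)) ↑w₀)
        (((bc (0 : P) (Dψ₀ ((0 : V₀), α))).comp (0 : (V₀ × P) →L[ℝ] V))
          + ((bc (0 : P)).comp D1
            + (bc.comp (ContinuousLinearMap.snd ℝ V₀ P)).flip (Dψ₀ ((0 : V₀), α))).flip ↑w₀)
        ((0, 0) : V₀ × P) :=
      (hcbc0.clm_apply hd1).clm_apply (hasFDerivAt_const (↑w₀ : V) _)
    have hgα : HasFDerivAt (fun p : V₀ × P => bc α (ψ p))
        ((bc α).comp Dψ₀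
          + (0 : (V₀ × P) →L[ℝ] V →L[ℝ] V →L[ℝ] ℝ).flip (ψ ((0, 0) : V₀ × P)))
        ((0, 0) : V₀ × P) :=
      (hasFDerivAt_const (bc α) ((0, 0) : V₀ × P)).clm_apply hψdiff.hasFDerivAt
    have hs2b : HasFDerivAt (fun p : V₀ × P => bc α (ψ p) ↑w₀)
        (((bc α (ψ ((0, 0) : V₀ × P))).comp (0 : (V₀ × P) →L[ℝ] V))
          + ((bc α).comp Dψ₀
            + (0 : (V₀ × P) →L[ℝ] V →L[ℝ] V →L[ℝ] ℝ).flip (ψ ((0, 0) : V₀ × P))).flip ↑w₀)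
        ((0, 0) : V₀ × P) :=
      hgα.clm_apply (hasFDerivAt_const (↑w₀ : V) _)
    have hS := hs1.fun_sub (hs2a.fun_add hs2b)
    have hfinal : fderiv ℝ (fun p : V₀ × P => fderiv ℝ q p ((0 : V₀), α))
        ((0, 0) : V₀ × P) (v₀, 0) = -(b α ↑v₀ ↑w₀) := by
      rw [hrev.fderiv_eq, hS.fderiv]
      have hz : Dψ₀ ((0 : V₀), α) = 0 := hDψ2 α
      have ho : Dψ₀ ((v₀, 0) : V₀ × P) = (↑v₀ : V) := hDψ1 v₀
      simp only [ContinuousLinearMap.add_apply, ContinuousLinearMap.sub_apply,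
        ContinuousLinearMap.comp_apply, ContinuousLinearMap.flip_apply,
        ContinuousLinearMap.zero_apply,
        ContinuousLinearMap.coe_snd', hz, ho, map_zero]
      have hH20 : H2 = fderiv ℝ (fderiv ℝ f₀) 0 := by rw [hH2def, hψ00]
      rw [hH20]
      rw [hkill w₀ (D1 (v₀, 0))]
      rw [hbc]
      simp
    rw [hgoal1, hswap, hfinal]
end

section
/- Let E be a finite-dimensional real normed space of dimension n ≥ 1 and let h : E → ℝ be a smooth function with h(0) = 0, dh(0) = 0 and d²h(0) a positive definite quadratic form. Then there exist an open neighborhood U of 0 in E and ε₀ > 0 such that for every ε ∈ (0, ε₀), the level set {v ∈ U : h(v) = ε} is a nonempty compact set homeomorphic to the Euclidean sphere of dimension n − 1. -/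
open Filter Topology Metric

section SphereHomeo
variable {E F : Type*} [NormedAddCommGroup E] [NormedSpace ℝ E]
  [NormedAddCommGroup F] [NormedSpace ℝ F]

private noncomputable def sphereMapCLE (e : E ≃L[ℝ] F) (v : sphere (0:E) 1) :
    sphere (0:F) 1 := by
  refine ⟨‖e v‖⁻¹ • e v, ?_⟩
  have hv : (v : E) ≠ 0 := by
    have := mem_sphere_zero_iff_norm.mp v.2
    intro h; rw [h] at this; simp at this
  have hne : ‖e (v:E)‖ ≠ 0 := by
    simpa using (e.map_ne_zero_iff.mpr hv)
  rw [mem_sphere_zero_iff_norm, norm_smul, norm_inv, norm_norm]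
  field_simp

private lemma sphereMapCLE_leftinv (e : E ≃L[ℝ] F) (v : sphere (0:E) 1) :
    sphereMapCLE e.symm (sphereMapCLE e v) = v := by
  have hv1 : ‖(v:E)‖ = 1 := mem_sphere_zero_iff_norm.mp v.2
  have hv : (v : E) ≠ 0 := by intro h; rw [h] at hv1; simp at hv1
  have hne : ‖e (v:E)‖ ≠ 0 := by simpa using (e.map_ne_zero_iff.mpr hv)
  apply Subtype.ext
  show ‖e.symm (‖e (v:E)‖⁻¹ • e (v:E))‖⁻¹ • e.symm (‖e (v:E)‖⁻¹ • e (v:E)) = (v:E)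
  rw [map_smul, e.symm_apply_apply, norm_smul, norm_inv, norm_norm, hv1, mul_one, inv_inv,
    smul_smul]
  field_simp
  rw [one_smul]

private noncomputable def sphereHomeoCLE (e : E ≃L[ℝ] F) :
    (sphere (0:E) 1) ≃ₜ (sphere (0:F) 1) where
  toFun := sphereMapCLE e
  invFun := sphereMapCLE e.symm
  left_inv := sphereMapCLE_leftinv e
  right_inv := by
    intro w
    have := sphereMapCLE_leftinv e.symm w
    simpa using this
  continuous_toFun := by
    apply Continuous.subtype_mk
    have hc : Continuous fun v : sphere (0:E) 1 => e (v:E) :=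
      e.continuous.comp continuous_subtype_val
    exact ((hc.norm.inv₀ (fun v => by
      have hv1 : ‖(v:E)‖ = 1 := mem_sphere_zero_iff_norm.mp v.2
      have hv : (v : E) ≠ 0 := by intro h; rw [h] at hv1; simp at hv1
      simpa using (e.map_ne_zero_iff.mpr hv))).smul hc)
  continuous_invFun := by
    apply Continuous.subtype_mk
    have hc : Continuous fun v : sphere (0:F) 1 => e.symm (v:F) :=
      e.symm.continuous.comp continuous_subtype_val
    exact ((hc.norm.inv₀ (fun v => by
      have hv1 : ‖(v:F)‖ = 1 := mem_sphere_zero_iff_norm.mp v.2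
      have hv : (v : F) ≠ 0 := by intro h; rw [h] at hv1; simp at hv1
      simpa using (e.symm.map_ne_zero_iff.mpr hv))).smul hc)

end SphereHomeo

set_option maxHeartbeats 2000000 in
/-- Morse lemma consequence: near a nondegenerate minimum of a smooth function `h` on an
`n`-dimensional real normed space (with `h(0) = 0`, `dh(0) = 0`, `d²h(0)` positive definite),
the nearby positive level sets of `h` are nonempty compact sets homeomorphic to the Euclidean
sphere of dimension `n - 1`. -/
theorem level_sets_near_nondegenerate_minimum_are_spheres
    {E : Type*} [NormedAddCommGroup E] [NormedSpace ℝ E] [FiniteDimensional ℝ E]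
    (n : ℕ) (hn : n = Module.finrank ℝ E) (hn1 : 1 ≤ n)
    (h : E → ℝ) (hh : ContDiff ℝ (⊤ : ℕ∞) h) (h0 : h 0 = 0) (hdh : fderiv ℝ h 0 = 0)
    (hpos : ∀ v : E, v ≠ 0 → 0 < fderiv ℝ (fderiv ℝ h) 0 v v) :
    ∃ U ∈ 𝓝 (0 : E), ∃ ε₀ > (0 : ℝ), ∀ ε ∈ Set.Ioo 0 ε₀,
      ({v ∈ U | h v = ε}).Nonempty ∧ IsCompact {v ∈ U | h v = ε} ∧
      Nonempty ({v ∈ U | h v = ε} ≃ₜ Metric.sphere (0 : EuclideanSpace ℝ (Fin n)) 1) := by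
  haveI : Nontrivial E := by
    have : 0 < Module.finrank ℝ E := by omega
    exact Module.nontrivial_of_finrank_pos this
  set B := fderiv ℝ (fderiv ℝ h) 0 with hB
  -- Step 1: coercivity of the second derivative
  obtain ⟨c, hc, hq⟩ : ∃ c > 0, ∀ v : E, c * ‖v‖^2 ≤ B v v := by
    have hsne : (sphere (0:E) 1).Nonempty := NormedSpace.sphere_nonempty.mpr zero_le_one
    have hcont : Continuous fun v : E => B v v :=
      B.continuous₂.comp (continuous_id.prodMk continuous_id)
    obtain ⟨v₀, hv₀, hmin⟩ := (isCompact_sphere (0:E) 1).exists_isMinOn hsne hcont.continuousOn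
    have hv₀1 : ‖v₀‖ = 1 := mem_sphere_zero_iff_norm.mp hv₀
    have hv₀0 : v₀ ≠ 0 := by intro h; rw [h] at hv₀1; simp at hv₀1
    refine ⟨B v₀ v₀, hpos v₀ hv₀0, fun v => ?_⟩
    rcases eq_or_ne v 0 with rfl | hv
    · simp
    · set a := ‖v‖ with ha
      have ha0 : 0 < a := norm_pos_iff.mpr hv
      set u := a⁻¹ • v with hu
      have hu1 : ‖u‖ = 1 := by rw [hu, norm_smul, norm_inv, norm_norm]; field_simp
      have hvu : v = a • u := by rw [hu, smul_smul]; field_simp; rw [one_smul]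
      have hle : B v₀ v₀ ≤ B u u := hmin (mem_sphere_zero_iff_norm.mpr hu1)
      have hBv : B v v = a^2 * B u u := by
        rw [hvu]
        simp [map_smul, smul_eq_mul]
        ring
      rw [hBv]
      nlinarith [sq_nonneg a]
  -- Step 2: Taylor bound on the gradient
  obtain ⟨r, hr, hgrad⟩ : ∃ r > 0, ∀ w : E, ‖w‖ ≤ r → c/2 * ‖w‖^2 ≤ fderiv ℝ h w w := by
    have hf1 : ContDiff ℝ 1 (fderiv ℝ h) := hh.fderiv_right (by exact WithTop.coe_le_coe.mpr le_top)
    have hd2 : HasFDerivAt (fderiv ℝ h) B 0 :=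
      ((hf1.differentiable one_ne_zero) 0).hasFDerivAt
    have hlo : (fun w => fderiv ℝ h w - B w) =o[𝓝 (0:E)] fun w => w := by
      have := hd2.isLittleO
      simpa [hdh] using this
    have hev : ∀ᶠ w in 𝓝 (0:E), ‖fderiv ℝ h w - B w‖ ≤ c/2 * ‖w‖ :=
      hlo.def (by positivity)
    rw [Metric.eventually_nhds_iff] at hev
    obtain ⟨δ, hδ, hball⟩ := hev
    refine ⟨δ/2, by positivity, fun w hw => ?_⟩
    have hwb : dist w 0 < δ := by
      rw [dist_zero_right]; linarith
    have h1 : ‖fderiv ℝ h w - B w‖ ≤ c/2 * ‖w‖ := hball hwb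
    have h2 : |(fderiv ℝ h w - B w) w| ≤ c/2 * ‖w‖^2 := by
      calc |(fderiv ℝ h w - B w) w| ≤ ‖fderiv ℝ h w - B w‖ * ‖w‖ :=
            (fderiv ℝ h w - B w).le_opNorm w
        _ ≤ c/2 * ‖w‖ * ‖w‖ := by
            have := norm_nonneg w
            nlinarith
        _ = c/2 * ‖w‖^2 := by ring
    have h3 : fderiv ℝ h w w = B w w + (fderiv ℝ h w - B w) w := by
      simp [ContinuousLinearMap.sub_apply]
    have h4 := hq w
    have := abs_le.mp h2
    rw [h3]
    linarith [this.1]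
  -- Step 3: strict monotonicity along rays
  have hd1 : Differentiable ℝ h := hh.differentiable (by simp)
  have hmono : ∀ v : E, ‖v‖ = 1 → StrictMonoOn (fun t => h (t • v)) (Set.Icc 0 r) := by
    intro v hv
    have hder : ∀ t : ℝ, HasDerivAt (fun t : ℝ => h (t • v)) (fderiv ℝ h (t • v) v) t := by
      intro t
      have h2 : HasDerivAt (fun t : ℝ => t • v) v t := by
        simpa using (hasDerivAt_id t).smul_const v
      exact (hd1 (t • v)).hasFDerivAt.comp_hasDerivAt t h2
    apply strictMonoOn_of_deriv_pos (convex_Icc 0 r)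
    · exact (hh.continuous.comp (continuous_id.smul continuous_const)).continuousOn
    · intro t ht
      rw [interior_Icc] at ht
      rw [(hder t).deriv]
      have htv : ‖t • v‖ = t := by
        rw [norm_smul, hv, mul_one, Real.norm_eq_abs, abs_of_pos ht.1]
      have := hgrad (t • v) (by rw [htv]; exact le_of_lt ht.2)
      rw [htv] at this
      have hlin : fderiv ℝ h (t • v) (t • v) = t * fderiv ℝ h (t • v) v := by
        simp
      rw [hlin] at this
      have h1 : 0 < t * fderiv ℝ h (t • v) v :=
        lt_of_lt_of_le (by have := ht.1; positivity) this
      by_contra hX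
      push_neg at hX
      nlinarith [mul_nonneg (le_of_lt ht.1) (neg_nonneg.mpr hX)]
  -- auxiliary facts about unit vectors
  have hsmul_norm : ∀ (v : E), ‖v‖ = 1 → ∀ t : ℝ, 0 ≤ t → ‖t • v‖ = t := by
    intro v hv t ht
    rw [norm_smul, hv, mul_one, Real.norm_eq_abs, abs_of_nonneg ht]
  -- Step 4: ε₀ = min of h on the sphere of radius r
  obtain ⟨w₀, hw₀, hminr⟩ := (isCompact_sphere (0:E) r).exists_isMinOn
    (NormedSpace.sphere_nonempty.mpr hr.le) hh.continuous.continuousOn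
  set ε₀ := h w₀ with hε₀
  have hw₀r : ‖w₀‖ = r := mem_sphere_zero_iff_norm.mp hw₀
  have hε₀pos : 0 < ε₀ := by
    have hw₀0 : w₀ ≠ 0 := by
      intro hz; rw [hz, norm_zero] at hw₀r; exact absurd hw₀r.symm (ne_of_gt hr)
    set u := r⁻¹ • w₀ with hu
    have hu1 : ‖u‖ = 1 := by
      rw [hu, norm_smul, norm_inv, Real.norm_eq_abs, abs_of_pos hr, hw₀r]
      field_simp
    have hru : r • u = w₀ := by rw [hu, smul_smul]; field_simp; rw [one_smul]
    have := hmono u hu1 (Set.left_mem_Icc.mpr hr.le) (Set.right_mem_Icc.mpr hr.le) hr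
    simpa [hru, h0] using this
  have hrlow : ∀ w : E, ‖w‖ = r → ε₀ ≤ h w := fun w hw =>
    hminr (mem_sphere_zero_iff_norm.mpr hw)
  refine ⟨ball (0:E) r, ball_mem_nhds 0 hr, ε₀, hε₀pos, fun ε hε => ?_⟩
  obtain ⟨hε1, hε2⟩ := hε
  set L := {v ∈ ball (0:E) r | h v = ε} with hL
  -- description of the level set
  have hLdesc : L = closedBall (0:E) r ∩ h ⁻¹' {ε} := by
    ext x
    simp only [hL, Set.mem_setOf_eq, Set.mem_sep_iff, mem_ball_zero_iff, Set.mem_inter_iff,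
      mem_closedBall_zero_iff, Set.mem_preimage, Set.mem_singleton_iff]
    constructor
    · rintro ⟨h1, h2⟩; exact ⟨h1.le, h2⟩
    · rintro ⟨h1, h2⟩
      refine ⟨lt_of_le_of_ne h1 ?_, h2⟩
      intro heq
      have := hrlow x heq
      rw [h2] at this
      linarith
  have hLcomp : IsCompact L := by
    rw [hLdesc]
    exact (isCompact_closedBall 0 r).inter_right
      (isClosed_singleton.preimage hh.continuous)
  -- existence of level crossing on each ray
  have hex : ∀ v : E, ‖v‖ = 1 → ∃ t ∈ Set.Ioo (0:ℝ) r, h (t • v) = ε := by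
    intro v hv
    have hcont : ContinuousOn (fun t : ℝ => h (t • v)) (Set.Icc 0 r) :=
      (hh.continuous.comp (continuous_id.smul continuous_const)).continuousOn
    have hIVT := intermediate_value_Ioo hr.le hcont
    have hεmem : ε ∈ Set.Ioo ((fun t : ℝ => h (t • v)) 0) ((fun t : ℝ => h (t • v)) r) := by
      constructor
      · simpa [h0] using hε1
      · have : ε₀ ≤ h (r • v) := hrlow _ (hsmul_norm v hv r hr.le)
        simpa using lt_of_lt_of_le hε2 this
    obtain ⟨t, ht, hth⟩ := hIVT hεmem
    exact ⟨t, ht, hth⟩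
  -- the level set is nonempty
  obtain ⟨v₁, hv₁⟩ := exists_norm_eq E (zero_le_one' ℝ)
  have hLne : L.Nonempty := by
    obtain ⟨t, ht, hth⟩ := hex v₁ hv₁
    exact ⟨t • v₁, by
      simp only [hL, Set.mem_sep_iff, mem_ball_zero_iff]
      exact ⟨by rw [hsmul_norm v₁ hv₁ t ht.1.le]; exact ht.2, hth⟩⟩
  -- elements of L are nonzero
  have hLnz : ∀ x ∈ L, x ≠ 0 := by
    intro x hx hx0
    have := hx.2
    rw [hx0, h0] at this
    linarith
  -- the normalization map L → sphere 0 1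
  have hmem : ∀ x : L, ‖(x : E)‖⁻¹ • (x : E) ∈ sphere (0:E) 1 := by
    intro x
    have hx0 : (x : E) ≠ 0 := hLnz x x.2
    rw [mem_sphere_zero_iff_norm, norm_smul, norm_inv, norm_norm]
    exact inv_mul_cancel₀ (norm_ne_zero_iff.mpr hx0)
  -- uniqueness of the crossing parameter
  have huniq : ∀ v : E, ‖v‖ = 1 → ∀ s t : ℝ, s ∈ Set.Icc 0 r → t ∈ Set.Icc 0 r →
      h (s • v) = ε → h (t • v) = ε → s = t := by
    intro v hv s t hs ht h1 h2
    exact (hmono v hv).injOn hs ht (by simp only [h1, h2])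
  -- bijection
  let Ψ : L → sphere (0:E) 1 := fun x => ⟨‖(x : E)‖⁻¹ • (x : E), hmem x⟩
  have hΨbij : Function.Bijective Ψ := by
    constructor
    · rintro ⟨x, hx⟩ ⟨y, hy⟩ hxy
      have hx0 : x ≠ 0 := hLnz x hx
      have hy0 : y ≠ 0 := hLnz y hy
      have hnx : ‖x‖ ≠ 0 := norm_ne_zero_iff.mpr hx0
      have hny : ‖y‖ ≠ 0 := norm_ne_zero_iff.mpr hy0
      simp only [Ψ, Subtype.mk.injEq] at hxy
      have hv1 : ‖‖x‖⁻¹ • x‖ = 1 := by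
        rw [norm_smul, norm_inv, norm_norm]; exact inv_mul_cancel₀ hnx
      have hxv : x = ‖x‖ • ‖x‖⁻¹ • x := by
        rw [smul_smul, mul_inv_cancel₀ hnx, one_smul]
      have hyv : y = ‖y‖ • ‖x‖⁻¹ • x := by
        rw [hxy, smul_smul, mul_inv_cancel₀ hny, one_smul]
      have hxr : ‖x‖ ∈ Set.Icc (0:ℝ) r :=
        ⟨norm_nonneg x, (mem_ball_zero_iff.mp hx.1).le⟩
      have hyr : ‖y‖ ∈ Set.Icc (0:ℝ) r :=
        ⟨norm_nonneg y, (mem_ball_zero_iff.mp hy.1).le⟩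
      have h1 : h (‖x‖ • ‖x‖⁻¹ • x) = ε := by rw [← hxv]; exact hx.2
      have h2 : h (‖y‖ • ‖x‖⁻¹ • x) = ε := by rw [← hyv]; exact hy.2
      have heq := huniq _ hv1 ‖x‖ ‖y‖ hxr hyr h1 h2
      apply Subtype.ext
      show x = y
      calc x = ‖x‖ • ‖x‖⁻¹ • x := hxv
        _ = ‖y‖ • ‖x‖⁻¹ • x := by rw [heq]
        _ = y := hyv.symm
    · rintro ⟨v, hv⟩
      have hv1 : ‖v‖ = 1 := mem_sphere_zero_iff_norm.mp hv
      obtain ⟨t, ht, hth⟩ := hex v hv1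
      have htn : ‖t • v‖ = t := hsmul_norm v hv1 t ht.1.le
      have hmemL : t • v ∈ L := by
        simp only [hL, Set.mem_sep_iff, mem_ball_zero_iff]
        exact ⟨by rw [htn]; exact ht.2, hth⟩
      refine ⟨⟨t • v, hmemL⟩, ?_⟩
      apply Subtype.ext
      show ‖t • v‖⁻¹ • (t • v) = v
      rw [htn, smul_smul, inv_mul_cancel₀ (ne_of_gt ht.1), one_smul]
  have hΨcont : Continuous Ψ := by
    apply Continuous.subtype_mk
    have hcv : Continuous fun x : L => (x : E) := continuous_subtype_val
    exact (hcv.norm.inv₀ (fun x => norm_ne_zero_iff.mpr (hLnz x x.2))).smul hcv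
  haveI : CompactSpace L := isCompact_iff_compactSpace.mp hLcomp
  let Ψh : L ≃ₜ sphere (0:E) 1 :=
    Continuous.homeoOfEquivCompactToT2 (f := Equiv.ofBijective Ψ hΨbij) hΨcont
  have hfr : Module.finrank ℝ E = Module.finrank ℝ (EuclideanSpace ℝ (Fin n)) := by
    rw [finrank_euclideanSpace_fin, ← hn]
  let eCL : E ≃L[ℝ] EuclideanSpace ℝ (Fin n) :=
    (LinearEquiv.ofFinrankEq E (EuclideanSpace ℝ (Fin n)) hfr).toContinuousLinearEquiv
  exact ⟨hLne, hLcomp, ⟨Ψh.trans (sphereHomeoCLE eCL)⟩⟩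
end

section
/- Let m > 0, k > 0 and γ, ξ₁, ξ₂ be real numbers. Then m²ξ₂⁴ − 2((km + γ²) + (mξ₁ + γ)²)ξ₂² + (mξ₁² + 2γξ₁ − k)² = 0 if and only if there exist signs s₁, s₂ ∈ {1, −1} such that ξ₂ = (s₁·|mξ₁ + γ| + s₂·√(γ² + km))/m. -/
/-! Multiplying the quartic by `m²` turns it, with `a = |mξ₁ + γ|` and `b = √(γ² + km)`, into the
biquadratic `x⁴ - 2(a² + b²)x² + (a² - b²)²` in `x = mξ₂`, whose four roots are `±a ± b`. -/

theorem biquadratic_factor {R : Type*} [CommRing R] (x a b : R) :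
    x ^ 4 - 2 * (a ^ 2 + b ^ 2) * x ^ 2 + (a ^ 2 - b ^ 2) ^ 2
      = (x - (a + b)) * (x + (a + b)) * ((x - (a - b)) * (x + (a - b))) := by
  ring

theorem biquadratic_eq_zero_iff {R : Type*} [CommRing R] [IsDomain R] (x a b : R) :
    x ^ 4 - 2 * (a ^ 2 + b ^ 2) * x ^ 2 + (a ^ 2 - b ^ 2) ^ 2 = 0 ↔
      ∃ s₁ s₂ : R, (s₁ = 1 ∨ s₁ = -1) ∧ (s₂ = 1 ∨ s₂ = -1) ∧ x = s₁ * a + s₂ * b := by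
  rw [biquadratic_factor]
  simp only [mul_eq_zero, sub_eq_zero, add_eq_zero_iff_eq_neg]
  constructor
  · rintro ((h | h) | (h | h))
    · exact ⟨1, 1, .inl rfl, .inl rfl, by rw [h]; ring⟩
    · exact ⟨-1, -1, .inr rfl, .inr rfl, by rw [h]; ring⟩
    · exact ⟨1, -1, .inl rfl, .inr rfl, by rw [h]; ring⟩
    · exact ⟨-1, 1, .inr rfl, .inl rfl, by rw [h]; ring⟩
  · rintro ⟨s₁, s₂, hs₁ | hs₁, hs₂ | hs₂, rfl⟩ <;> subst hs₁ hs₂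
    · exact .inl (.inl (by ring))
    · exact .inr (.inl (by ring))
    · exact .inr (.inr (by ring))
    · exact .inl (.inr (by ring))

/-- The quartic equation in `ξ₂` characterizing the toral velocities `(ξ₁, ξ₂)` at which the
Hessian of the augmented Hamiltonian of the two coupled planar oscillators in a magnetic field
becomes singular holds iff `ξ₂ = (±|mξ₁ + γ| ± √(γ² + km))/m`. -/
theorem coupled_oscillators_singular_velocities (m k γ ξ₁ ξ₂ : ℝ) (hm : 0 < m) (hk : 0 < k) :
    m ^ 2 * ξ₂ ^ 4 - 2 * ((k * m + γ ^ 2) + (m * ξ₁ + γ) ^ 2) * ξ₂ ^ 2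
        + (m * ξ₁ ^ 2 + 2 * γ * ξ₁ - k) ^ 2 = 0 ↔
      ∃ s₁ s₂ : ℝ, (s₁ = 1 ∨ s₁ = -1) ∧ (s₂ = 1 ∨ s₂ = -1) ∧
        ξ₂ = (s₁ * |m * ξ₁ + γ| + s₂ * Real.sqrt (γ ^ 2 + k * m)) / m := by
  set a := |m * ξ₁ + γ|
  set b := Real.sqrt (γ ^ 2 + k * m)
  have ha : a ^ 2 = (m * ξ₁ + γ) ^ 2 := sq_abs _
  have hb : b ^ 2 = γ ^ 2 + k * m := Real.sq_sqrt (by positivity)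
  have hscale : m ^ 2 * (m ^ 2 * ξ₂ ^ 4 - 2 * ((k * m + γ ^ 2) + (m * ξ₁ + γ) ^ 2) * ξ₂ ^ 2
        + (m * ξ₁ ^ 2 + 2 * γ * ξ₁ - k) ^ 2)
      = (m * ξ₂) ^ 4 - 2 * (a ^ 2 + b ^ 2) * (m * ξ₂) ^ 2 + (a ^ 2 - b ^ 2) ^ 2 := by
    rw [ha, hb]; ring
  rw [← mul_right_inj' (pow_ne_zero 2 hm.ne'), mul_zero, hscale, biquadratic_eq_zero_iff]
  simp only [eq_div_iff hm.ne', mul_comm ξ₂ m]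
end
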